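/- arXiv:1704.04490 — 5 statements merged into one kernel-verified Lean document; each statement's English description precedes it below -/
import Mathlib

section
/- Let M be a countable MDP, φ a prefix-independent objective (membership of a play in φ depends only on its tail), s_0 a state, and σ an optimal strategy from s_0, i.e., P_{M,s_0,σ}(φ) = val(s_0) where val(s) = sup_σ P_{M,s,σ}(φ). Then for every partial play s_0 s_1 ⋯ s_n induced by σ with P_{M,s_0,σ}(s_0⋯s_n S^ω) > 0, the conditional probability P_{M,s_0,σ}(φ | s_0⋯s_n S^ω) equals val(s_n). -/
open MeasureTheory
open scoped ENNReal

/-- Probability of the finite path `w 0, …, w n` under step function `step`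
(which maps a history, ending in the current state, to a distribution over
successors). -/
noncomputable def pathProb {S : Type*} (step : List S → S → ℝ≥0∞) (w : ℕ → S) : ℕ → ℝ≥0∞
  | 0 => 1
  | n + 1 => pathProb step w n * step ((List.range (n + 1)).map w) (w (n + 1))

/-- Cylinder set of plays agreeing with `w` up to time `n`. -/
def cyl {S : Type*} (w : ℕ → S) (n : ℕ) : Set (ℕ → S) := {ω | ∀ i ≤ n, ω i = w i}

open Classical in
/-- `μ` is the measure on plays induced by the start state `s₀` and the step
function `step`. -/
noncomputable def IsInduced {S : Type*} [MeasurableSpace S] (μ : Measure (ℕ → S)) (s₀ : S)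
    (step : List S → S → ℝ≥0∞) : Prop :=
  ∀ (n : ℕ) (w : ℕ → S),
    μ (cyl w n) = (if w 0 = s₀ then 1 else 0) * pathProb step w n

open Classical in
/-- One-step function of the MDP with random transition probabilities `tr`
under strategy `σ`: at controller states follow `σ`, at random states follow
`tr`. -/
noncomputable def extStep {S : Type*} (isCtrl : S → Prop) (tr : S → S → ℝ≥0∞)
    (σ : List S → S → ℝ≥0∞) : List S → S → ℝ≥0∞ := fun h u =>
  match h.getLast? with
  | none => 0
  | some s => if isCtrl s then σ h u else tr s u

/-- `σ` is a valid strategy: at every history ending in a controller state it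
gives a probability distribution supported on successors. -/
def IsStrategy {S : Type*} (isCtrl : S → Prop) (succ : S → S → Prop)
    (σ : List S → S → ℝ≥0∞) : Prop :=
  ∀ (h : List S) (s : S), isCtrl s →
    (∑' u, σ (h ++ [s]) u) = 1 ∧ ∀ u, σ (h ++ [s]) u ≠ 0 → succ s u

/-- Prefix-independence (tail-invariance) of an objective. -/
def PrefixIndep {S : Type*} (φ : Set (ℕ → S)) : Prop :=
  ∀ (ω : ℕ → S) (k : ℕ), ((fun n => ω (n + k)) ∈ φ ↔ ω ∈ φ)

namespace Stmt8Aux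

open MeasureTheory
open scoped ENNReal

variable {S : Type*}

lemma cyl_congr {w w' : ℕ → S} {n : ℕ} (h : ∀ i ≤ n, w i = w' i) : cyl w n = cyl w' n := by
  ext ω
  constructor <;> intro hω i hi
  · rw [← h i hi]; exact hω i hi
  · rw [h i hi]; exact hω i hi

lemma meas_cyl [MeasurableSpace S] (htop : ∀ A : Set S, MeasurableSet A)
    (u : ℕ → S) (m : ℕ) : MeasurableSet (cyl u m) := by
  have h : cyl u m = ⋂ (i : ℕ) (_ : i ≤ m), (fun ω : ℕ → S => ω i) ⁻¹' {u i} := by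
    ext ω; simp [cyl]
  rw [h]
  exact MeasurableSet.iInter fun i => MeasurableSet.iInter fun _ =>
    (measurable_pi_apply i) (htop _)

noncomputable def fext (n : ℕ) (v : Fin (n+1) → S) : ℕ → S :=
  fun i => v ⟨min i n, Nat.lt_succ_of_le (min_le_right i n)⟩

lemma fext_eq {n : ℕ} (v : Fin (n+1) → S) {i : ℕ} (hi : i ≤ n) :
    fext n v i = v ⟨i, Nat.lt_succ_of_le hi⟩ := by
  simp only [fext]
  congr 1
  exact Fin.ext (by simp [min_eq_left hi])

end Stmt8Aux
namespace Stmt8Aux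

open MeasureTheory
open scoped ENNReal

variable {S : Type*}

lemma all_meas [Countable S] [MeasurableSpace S]
    (μ : S → Measure (ℕ → S)) (hpr : ∀ s, IsProbabilityMeasure (μ s))
    (h1 : ∀ s t : S, t ≠ s → μ s {ω : ℕ → S | ω 0 = t} = 0)
    (h2 : ∀ s : S, μ s {ω : ℕ → S | ω 0 = s} = 1) :
    ∀ A : Set S, MeasurableSet A := by
  classical
  have sep : ∀ s t : S, s ≠ t → ∃ A : Set S, MeasurableSet A ∧ s ∈ A ∧ t ∉ A := by
    intro s t hst
    by_contra hno
    push_neg at hno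
    have hiff : ∀ A : Set S, MeasurableSet A → (s ∈ A ↔ t ∈ A) := by
      intro A hA
      constructor
      · exact hno A hA
      · intro ht
        by_contra hs
        exact (hno Aᶜ hA.compl hs) ht
    have key : ∀ E : Set (ℕ → S), MeasurableSet E →
        ∀ ω : ℕ → S, (Function.update ω 0 s ∈ E ↔ Function.update ω 0 t ∈ E) := by
      let m' : MeasurableSpace (ℕ → S) :=
        { MeasurableSet' := fun E => ∀ ω : ℕ → S,
            (Function.update ω 0 s ∈ E ↔ Function.update ω 0 t ∈ E)
          measurableSet_empty := by simp
          measurableSet_compl := fun E hE ω => by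
            simp only [Set.mem_compl_iff]
            exact not_congr (hE ω)
          measurableSet_iUnion := fun f hf ω => by
            simp only [Set.mem_iUnion]
            exact exists_congr fun i => hf i ω }
      have hcoord : ∀ i : ℕ, @Measurable _ _ m' _ (fun ω : ℕ → S => ω i) := by
        intro i A hA
        show ∀ ω : ℕ → S, _
        intro ω
        by_cases hi : i = 0
        · subst hi
          simp only [Set.mem_preimage, Function.update_self]
          exact hiff A hA
        · simp only [Set.mem_preimage, Function.update_of_ne (Ne.symm (Ne.symm hi))]
      have hid : @Measurable (ℕ → S) (ℕ → S) m' MeasurableSpace.pi id :=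
        measurable_pi_iff.mpr hcoord
      exact fun E hE => hid hE
    obtain ⟨E, hsub, hEm, hE0⟩ := MeasureTheory.exists_measurable_superset (μ s) {ω : ℕ → S | ω 0 = t}
    have hsub' : {ω : ℕ → S | ω 0 = s} ⊆ E := by
      intro ω hω
      have ht' : Function.update ω 0 t ∈ E := hsub (by simp)
      have hs' : Function.update ω 0 s ∈ E := (key E hEm ω).mpr ht'
      have heq : Function.update ω 0 s = ω := by
        have : s = ω 0 := hω.symm
        rw [this]
        exact Function.update_eq_self 0 ω
      rwa [heq] at hs'
    have hle := measure_mono (μ := μ s) hsub'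
    rw [h2 s, hE0, h1 s t hst.symm] at hle
    simp at hle
  have hsing : ∀ s : S, MeasurableSet ({s} : Set S) := by
    intro s
    have hset : ({s} : Set S) = ⋂ t : S, if h : s = t then Set.univ else (sep s t h).choose := by
      ext x
      simp only [Set.mem_iInter, Set.mem_singleton_iff]
      constructor
      · rintro rfl t
        split_ifs with h
        · trivial
        · exact (sep x t h).choose_spec.2.1
      · intro hx
        by_contra hxs
        have hx' := hx x
        rw [dif_neg (fun h => hxs h.symm)] at hx'
        exact (sep s x (fun h => hxs h.symm)).choose_spec.2.2 hx'
    rw [hset]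
    exact MeasurableSet.iInter fun t => by
      split_ifs with h
      exacts [MeasurableSet.univ, (sep s t h).choose_spec.1]
  intro A
  have : A = ⋃ a ∈ A, {a} := by simp
  rw [this]
  exact MeasurableSet.biUnion (Set.to_countable A) fun b _ => hsing b

end Stmt8Aux
namespace Stmt8Aux

open MeasureTheory
open scoped ENNReal

variable {S : Type*}

def cylSets (S : Type*) : Set (Set (ℕ → S)) := {A | ∃ (u : ℕ → S) (m : ℕ), A = cyl u m}

lemma isPiSystem_cyl : IsPiSystem (cylSets S) := by
  rintro A ⟨u, m, rfl⟩ B ⟨u', m', rfl⟩ hne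
  obtain ⟨ω, hω1, hω2⟩ := hne
  refine ⟨ω, max m m', ?_⟩
  ext z
  constructor
  · rintro ⟨hz1, hz2⟩ i hi
    rcases le_max_iff.mp hi with h | h
    · rw [hz1 i h, ← hω1 i h]
    · rw [hz2 i h, ← hω2 i h]
  · intro hz
    exact ⟨fun i hi => by rw [hz i (hi.trans (le_max_left m m')), hω1 i hi],
           fun i hi => by rw [hz i (hi.trans (le_max_right m m')), hω2 i hi]⟩

lemma eval_preimage_mem [Countable S] {m : MeasurableSpace (ℕ → S)}
    (h : ∀ A ∈ cylSets S, MeasurableSet[m] A)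
    (i : ℕ) (A : Set S) : MeasurableSet[m] ((fun ω : ℕ → S => ω i) ⁻¹' A) := by
  have hset : (fun ω : ℕ → S => ω i) ⁻¹' A =
      ⋃ (v : Fin (i+1) → S) (_ : v ⟨i, Nat.lt_succ_self i⟩ ∈ A), cyl (fext i v) i := by
    ext ω
    simp only [Set.mem_preimage, Set.mem_iUnion]
    constructor
    · intro h
      refine ⟨fun j => ω j, h, ?_⟩
      intro j hj
      rw [fext_eq _ hj]
    · rintro ⟨v, hv, hω⟩
      have h := hω i le_rfl
      rw [fext_eq v le_rfl] at h
      rw [h]; exact hv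
  rw [hset]
  exact MeasurableSet.iUnion fun v => MeasurableSet.iUnion fun _ =>
    h _ ⟨fext i v, i, rfl⟩

lemma gen_cyl [Countable S] [MeasurableSpace S] (htop : ∀ A : Set S, MeasurableSet A) :
    (inferInstance : MeasurableSpace (ℕ → S)) = MeasurableSpace.generateFrom (cylSets S) := by
  apply le_antisymm
  · have hpi : (inferInstance : MeasurableSpace (ℕ → S))
        = ⨆ i : ℕ, MeasurableSpace.comap (fun ω : ℕ → S => ω i)
            (inferInstance : MeasurableSpace S) := rfl
    rw [hpi]
    refine iSup_le fun i => ?_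
    rw [MeasurableSpace.le_def]
    rintro E ⟨A, hA, rfl⟩
    exact eval_preimage_mem
      (fun B hB => MeasurableSpace.measurableSet_generateFrom hB) i A
  · apply MeasurableSpace.generateFrom_le
    rintro A ⟨u, m, rfl⟩
    exact meas_cyl htop u m

lemma ext_cyl [Countable S] [MeasurableSpace S] (htop : ∀ A : Set S, MeasurableSet A)
    {μ ν : Measure (ℕ → S)} [IsFiniteMeasure μ]
    (huniv : μ Set.univ = ν Set.univ)
    (h : ∀ (u : ℕ → S) (m : ℕ), μ (cyl u m) = ν (cyl u m)) : μ = ν :=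
  MeasureTheory.ext_of_generate_finite (cylSets S) (gen_cyl htop) isPiSystem_cyl
    (by rintro A ⟨u, m, rfl⟩; exact h u m) huniv

end Stmt8Aux
namespace Stmt8Aux

open MeasureTheory
open scoped ENNReal

variable {S : Type*}

def splice (v : ℕ → S) (n : ℕ) (u : ℕ → S) : ℕ → S := fun i => if i < n then v i else u (i - n)

lemma splice_lt {v u : ℕ → S} {n i : ℕ} (h : i < n) : splice v n u i = v i := if_pos h
lemma splice_ge {v u : ℕ → S} {n i : ℕ} (h : n ≤ i) : splice v n u i = u (i - n) :=
  if_neg (by omega)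

lemma splice_le {v u : ℕ → S} {n i : ℕ} (hu : u 0 = v n) (h : i ≤ n) : splice v n u i = v i := by
  rcases lt_or_eq_of_le h with h' | h'
  · exact splice_lt h'
  · subst h'
    rw [splice_ge le_rfl, Nat.sub_self]
    exact hu

lemma range_map_splice (v u : ℕ → S) (n : ℕ) :
    ∀ k, (List.range (n + k)).map (splice v n u) = (List.range n).map v ++ (List.range k).map u := by
  intro k
  induction k with
  | zero =>
    simp only [Nat.add_zero, List.range_zero, List.map_nil, List.append_nil]
    exact List.map_congr_left fun i hi => splice_lt (List.mem_range.mp hi)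
  | succ k ih =>
    have h1 : n + (k+1) = (n + k) + 1 := rfl
    rw [h1, List.range_succ, List.map_append, ih, List.range_succ, List.map_append,
      List.append_assoc]
    simp only [List.map_cons, List.map_nil]
    rw [splice_ge (Nat.le_add_right n k), Nat.add_sub_cancel_left]

lemma pathProb_congr (st st' : List S → S → ℝ≥0∞) (w w' : ℕ → S) (n : ℕ)
    (hw : ∀ i ≤ n, w i = w' i)
    (hst : ∀ k, k < n → ∀ x, st ((List.range (k+1)).map w) x = st' ((List.range (k+1)).map w') x) :
    pathProb st w n = pathProb st' w' n := by
  induction n with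
  | zero => rfl
  | succ n ih =>
    simp only [pathProb]
    rw [ih (fun i hi => hw i (hi.trans (Nat.le_succ n)))
        (fun k hk => hst k (hk.trans (Nat.lt_succ_self n))),
      hst n (Nat.lt_succ_self n), hw (n+1) le_rfl]

lemma pathProb_splice (st st' : List S → S → ℝ≥0∞) (v u : ℕ → S) (n : ℕ)
    (hst : ∀ l : List S, l ≠ [] → ∀ x, st ((List.range n).map v ++ l) x = st' l x)
    (hu : u 0 = v n) :
    ∀ m, pathProb st (splice v n u) (n + m)
      = pathProb st (splice v n u) n * pathProb st' u m := by
  intro m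
  induction m with
  | zero => simp [pathProb]
  | succ m ih =>
    have h1 : n + (m+1) = (n + m) + 1 := rfl
    rw [h1]
    simp only [pathProb]
    have h2 := range_map_splice v u n (m+1)
    rw [h1] at h2
    rw [ih, h2, hst ((List.range (m+1)).map u) (by simp) _,
      splice_ge (by omega), show n + m + 1 - n = m + 1 by omega, mul_assoc]

lemma measurable_shift [MeasurableSpace S] (n : ℕ) :
    Measurable (fun ω : ℕ → S => fun i => ω (i + n)) :=
  measurable_pi_lambda _ fun i => measurable_pi_apply (i + n)

lemma shift_cyl_inter (v u : ℕ → S) (n m : ℕ) (hu : u 0 = v n) :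
    (fun ω : ℕ → S => fun i => ω (i + n)) ⁻¹' cyl u m ∩ cyl v n = cyl (splice v n u) (n + m) := by
  ext ω
  simp only [Set.mem_inter_iff, Set.mem_preimage, cyl, Set.mem_setOf_eq]
  constructor
  · rintro ⟨h1, h2⟩ i hi
    by_cases hin : i < n
    · rw [splice_lt hin]; exact h2 i hin.le
    · push_neg at hin
      rw [splice_ge hin]
      have h := h1 (i - n) (by omega)
      rwa [show i - n + n = i by omega] at h
  · intro h
    constructor
    · intro j hj
      have h' := h (j + n) (by omega)
      rwa [splice_ge (by omega), show j + n - n = j by omega] at h'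
    · intro i hi
      have h' := h i (by omega)
      rwa [splice_le hu hi] at h'

lemma shift_cyl_inter_empty (v u : ℕ → S) (n m : ℕ) (hu : u 0 ≠ v n) :
    (fun ω : ℕ → S => fun i => ω (i + n)) ⁻¹' cyl u m ∩ cyl v n = ∅ := by
  ext ω
  simp only [Set.mem_inter_iff, Set.mem_preimage, cyl, Set.mem_setOf_eq,
    Set.mem_empty_iff_false, iff_false]
  rintro ⟨h1, h2⟩
  exact hu ((h1 0 (Nat.zero_le m)).symm.trans (by simpa using h2 n le_rfl))

lemma extStep_ctrl (isCtrl : S → Prop) (tr : S → S → ℝ≥0∞) (α : List S → S → ℝ≥0∞)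
    {l : List S} {a : S} (hl : l.getLast? = some a) (ha : isCtrl a) (x : S) :
    extStep isCtrl tr α l x = α l x := by
  unfold extStep
  rw [hl]
  simp [ha]

lemma extStep_rand (isCtrl : S → Prop) (tr : S → S → ℝ≥0∞) (α : List S → S → ℝ≥0∞)
    {l : List S} {a : S} (hl : l.getLast? = some a) (ha : ¬ isCtrl a) (x : S) :
    extStep isCtrl tr α l x = tr a x := by
  unfold extStep
  rw [hl]
  simp [ha]

lemma getLast?_of_ne_nil {l : List S} (h : l ≠ []) : ∃ a, l.getLast? = some a := by
  cases hl : l.getLast? with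
  | none => exact absurd (List.getLast?_eq_none_iff.mp hl) h
  | some a => exact ⟨a, rfl⟩

lemma extStep_congr (isCtrl : S → Prop) (tr : S → S → ℝ≥0∞) (α β : List S → S → ℝ≥0∞)
    {l : List S} (hne : l ≠ []) (hab : ∀ x, α l x = β l x) (x : S) :
    extStep isCtrl tr α l x = extStep isCtrl tr β l x := by
  obtain ⟨a, ha⟩ := getLast?_of_ne_nil hne
  by_cases hc : isCtrl a
  · rw [extStep_ctrl _ _ _ ha hc, extStep_ctrl _ _ _ ha hc]; exact hab x
  · rw [extStep_rand _ _ _ ha hc, extStep_rand _ _ _ ha hc]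

lemma extStep_append (isCtrl : S → Prop) (tr : S → S → ℝ≥0∞) (α : List S → S → ℝ≥0∞)
    (p : List S) {l : List S} (hne : l ≠ []) (x : S) :
    extStep isCtrl tr α (p ++ l) x = extStep isCtrl tr (fun h u => α (p ++ h) u) l x := by
  obtain ⟨a, ha⟩ := getLast?_of_ne_nil hne
  have ha2 : (p ++ l).getLast? = some a := by
    rw [List.getLast?_append, ha]
    rfl
  by_cases hc : isCtrl a
  · rw [extStep_ctrl _ _ _ ha2 hc, extStep_ctrl _ _ _ ha hc]
  · rw [extStep_rand _ _ _ ha2 hc, extStep_rand _ _ _ ha hc]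

lemma isStrategy_append {isCtrl : S → Prop} {succ : S → S → Prop} {α : List S → S → ℝ≥0∞}
    (hα : IsStrategy isCtrl succ α) (p : List S) :
    IsStrategy isCtrl succ fun h u => α (p ++ h) u := by
  intro h s hs
  have h' := hα (p ++ h) s hs
  simpa [List.append_assoc] using h'

end Stmt8Aux
namespace Stmt8Aux

open MeasureTheory
open scoped ENNReal

variable {S : Type*}

lemma condL [Countable S] [MeasurableSpace S]
    (htop : ∀ A : Set S, MeasurableSet A)
    (isCtrl : S → Prop) (succ : S → S → Prop) (tr : S → S → ℝ≥0∞)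
    (Pm : S → (List S → S → ℝ≥0∞) → Measure (ℕ → S))
    (hprob : ∀ s σ', IsProbabilityMeasure (Pm s σ'))
    (hind : ∀ (s : S) (σ' : List S → S → ℝ≥0∞), IsStrategy isCtrl succ σ' →
      IsInduced (Pm s σ') s (extStep isCtrl tr σ'))
    (s₀ : S) (α : List S → S → ℝ≥0∞) (hα : IsStrategy isCtrl succ α)
    (n : ℕ) (v : ℕ → S)
    (X : Set (ℕ → S)) (hX : MeasurableSet X) :
    Pm s₀ α ((fun ω : ℕ → S => fun i => ω (i + n)) ⁻¹' X ∩ cyl v n)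
      = Pm (v n) (fun h u => α ((List.range n).map v ++ h) u) X * Pm s₀ α (cyl v n) := by
  haveI := hprob s₀ α
  set αv : List S → S → ℝ≥0∞ := fun h u => α ((List.range n).map v ++ h) u with hαvdef
  haveI := hprob (v n) αv
  have hαvS : IsStrategy isCtrl succ αv := isStrategy_append hα _
  have hμind := hind s₀ α hα
  have hνind := hind (v n) αv hαvS
  have key : Measure.map (fun ω : ℕ → S => fun i => ω (i + n)) ((Pm s₀ α).restrict (cyl v n))
      = (Pm s₀ α (cyl v n)) • Pm (v n) αv := by
    haveI hfin : IsFiniteMeasure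
        (Measure.map (fun ω : ℕ → S => fun i => ω (i + n)) ((Pm s₀ α).restrict (cyl v n))) := by
      constructor
      rw [Measure.map_apply (measurable_shift n) MeasurableSet.univ, Set.preimage_univ,
        Measure.restrict_apply_univ]
      exact measure_lt_top _ _
    apply ext_cyl htop
    · rw [Measure.map_apply (measurable_shift n) MeasurableSet.univ, Set.preimage_univ,
        Measure.restrict_apply_univ, Measure.smul_apply, measure_univ, smul_eq_mul, mul_one]
    · intro u m
      rw [Measure.map_apply (measurable_shift n) (meas_cyl htop u m),
        Measure.restrict_apply ((measurable_shift n) (meas_cyl htop u m)),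
        Measure.smul_apply, smul_eq_mul, hνind m u]
      by_cases hu : u 0 = v n
      · rw [shift_cyl_inter v u n m hu, hμind (n + m) (splice v n u), hμind n v, if_pos hu]
        have hsp0 : splice v n u 0 = v 0 := by
          by_cases h0 : 0 < n
          · exact splice_lt h0
          · have hn0 : n = 0 := by omega
            subst hn0
            rw [splice_ge le_rfl]
            exact hu
        have hps := pathProb_splice (extStep isCtrl tr α) (extStep isCtrl tr αv) v u n
          (fun l hl x => extStep_append isCtrl tr α _ hl x) hu m
        have hpc : pathProb (extStep isCtrl tr α) (splice v n u) n
            = pathProb (extStep isCtrl tr α) v n := by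
          apply pathProb_congr
          · exact fun i hi => splice_le hu hi
          · intro k hk x
            have hl : (List.range (k+1)).map (splice v n u) = (List.range (k+1)).map v :=
              List.map_congr_left fun i hi =>
                splice_le hu (by have := List.mem_range.mp hi; omega)
            rw [hl]
        rw [hsp0, hps, hpc]
        ring
      · rw [shift_cyl_inter_empty v u n m hu, if_neg hu]
        simp
  calc Pm s₀ α ((fun ω : ℕ → S => fun i => ω (i + n)) ⁻¹' X ∩ cyl v n)
      = Measure.map (fun ω : ℕ → S => fun i => ω (i + n)) ((Pm s₀ α).restrict (cyl v n)) X := by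
        rw [Measure.map_apply (measurable_shift n) hX,
          Measure.restrict_apply ((measurable_shift n) hX)]
    _ = Pm (v n) αv X * Pm s₀ α (cyl v n) := by
        rw [key, Measure.smul_apply, smul_eq_mul, mul_comm]

lemma decomp [Countable S] [MeasurableSpace S] (htop : ∀ A : Set S, MeasurableSet A)
    (μ : Measure (ℕ → S)) (n : ℕ) (X : Set (ℕ → S)) (hX : MeasurableSet X) :
    μ X = ∑' v : Fin (n+1) → S, μ (X ∩ cyl (fext n v) n) := by
  have hcover : ⋃ v : Fin (n+1) → S, (X ∩ cyl (fext n v) n) = X := by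
    apply Set.Subset.antisymm
    · exact Set.iUnion_subset fun v => Set.inter_subset_left
    · intro ω hω
      refine Set.mem_iUnion.mpr ⟨fun j => ω j, hω, ?_⟩
      intro i hi
      rw [fext_eq _ hi]
  have hdisj : Pairwise (Function.onFun Disjoint
      fun v : Fin (n+1) → S => X ∩ cyl (fext n v) n) := by
    intro v v' hvv'
    rw [Function.onFun, Set.disjoint_left]
    rintro ω ⟨-, h1⟩ ⟨-, h2⟩
    apply hvv'
    funext j
    have hj : (j : ℕ) ≤ n := Nat.lt_succ_iff.mp j.isLt
    have e1 := h1 j hj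
    have e2 := h2 j hj
    rw [fext_eq _ hj] at e1 e2
    simp only [Fin.eta] at e1 e2
    rw [← e1, ← e2]
  conv_lhs => rw [← hcover]
  rw [measure_iUnion hdisj fun v => hX.inter (meas_cyl htop _ _)]

end Stmt8Aux

open Stmt8Aux

/-- Let `φ` be a prefix-independent objective and `σ` an optimal strategy from
`s₀`. Then for every partial play `w 0 ⋯ w n` induced by `σ` with positive
probability, the conditional probability of `φ` given the corresponding
cylinder equals `val (w n)`. -/
theorem stmt8 {S : Type*} [Countable S] [MeasurableSpace S]
    (isCtrl : S → Prop) (succ : S → S → Prop) (tr : S → S → ℝ≥0∞)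
    (Pm : S → (List S → S → ℝ≥0∞) → Measure (ℕ → S))
    (hprob : ∀ s σ', IsProbabilityMeasure (Pm s σ'))
    (hind : ∀ (s : S) (σ' : List S → S → ℝ≥0∞), IsStrategy isCtrl succ σ' →
      IsInduced (Pm s σ') s (extStep isCtrl tr σ'))
    (φ : Set (ℕ → S)) (hφmeas : MeasurableSet φ) (hφ : PrefixIndep φ)
    (val : S → ℝ≥0∞)
    (hval : ∀ s, val s =
      ⨆ (σ' : List S → S → ℝ≥0∞) (_ : IsStrategy isCtrl succ σ'), Pm s σ' φ)
    (s₀ : S) (σ : List S → S → ℝ≥0∞) (hσ : IsStrategy isCtrl succ σ)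
    (hopt : Pm s₀ σ φ = val s₀)
    (n : ℕ) (w : ℕ → S) (hw0 : w 0 = s₀)
    (hpos : Pm s₀ σ (cyl w n) ≠ 0) :
    Pm s₀ σ (φ ∩ cyl w n) = val (w n) * Pm s₀ σ (cyl w n) := by
  classical
  -- every subset of S is measurable
  have htop : ∀ A : Set S, MeasurableSet A := by
    apply all_meas (fun s => Pm s σ) (fun s => hprob s σ)
    · intro s t hts
      have h := hind s σ hσ 0 (fun _ => t)
      have hset : {ω : ℕ → S | ω 0 = t} = cyl (fun _ => t) 0 := by
        ext ω
        simp [cyl, Nat.le_zero]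
      rw [hset, h, if_neg hts, zero_mul]
    · intro s
      have h := hind s σ hσ 0 (fun _ => s)
      have hset : {ω : ℕ → S | ω 0 = s} = cyl (fun _ => s) 0 := by
        ext ω
        simp [cyl, Nat.le_zero]
      rw [hset, h, if_pos rfl]
      simp [pathProb]
  have hφshift : ∀ k : ℕ, (fun ω : ℕ → S => fun i => ω (i + k)) ⁻¹' φ = φ :=
    fun k => Set.ext fun ω => hφ ω k
  have hval1 : ∀ s, val s ≤ 1 := by
    intro s
    rw [hval s]
    exact iSup_le fun σ' => iSup_le fun hσ' => by
      haveI := hprob s σ'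
      exact prob_le_one
  haveI := hprob s₀ σ
  -- F and G
  have hFsum : ∑' v : Fin (n+1) → S, Pm s₀ σ (φ ∩ cyl (fext n v) n) = val s₀ := by
    rw [← decomp htop (Pm s₀ σ) n φ hφmeas]
    exact hopt
  have hFG : ∀ v : Fin (n+1) → S, Pm s₀ σ (φ ∩ cyl (fext n v) n)
      ≤ val (fext n v n) * Pm s₀ σ (cyl (fext n v) n) := by
    intro v
    have hL := condL htop isCtrl succ tr Pm hprob hind s₀ σ hσ n (fext n v) φ hφmeas
    rw [hφshift n] at hL
    rw [hL]
    apply mul_le_mul_left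
    rw [hval (fext n v n)]
    exact le_iSup₂ (f := fun σ' (_ : IsStrategy isCtrl succ σ') => Pm (fext n v n) σ' φ)
      _ (isStrategy_append hσ _)
  have hGsum : ∑' v : Fin (n+1) → S, val (fext n v n) * Pm s₀ σ (cyl (fext n v) n) ≤ val s₀ := by
    apply ENNReal.le_of_forall_pos_le_add
    intro ε hε _
    have hch : ∀ t : S, ∃ τ : List S → S → ℝ≥0∞,
        IsStrategy isCtrl succ τ ∧ val t ≤ Pm t τ φ + (ε : ℝ≥0∞) := by
      intro t
      by_cases hc : val t ≤ (ε : ℝ≥0∞)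
      · exact ⟨σ, hσ, hc.trans le_add_self⟩
      · push_neg at hc
        have hvt : val t ≠ ∞ := ((hval1 t).trans_lt ENNReal.one_lt_top).ne
        have hsub : val t - (ε : ℝ≥0∞) < val t :=
          ENNReal.sub_lt_self hvt (fun h0 => by simp [h0] at hc)
            (by simpa using hε.ne')
        have hsub' : val t - (ε : ℝ≥0∞)
            < ⨆ (σ' : List S → S → ℝ≥0∞) (_ : IsStrategy isCtrl succ σ'), Pm t σ' φ :=
          (hval t) ▸ hsub
        obtain ⟨τ, hτ⟩ := lt_iSup_iff.mp hsub'
        obtain ⟨hτS, hτv⟩ := lt_iSup_iff.mp hτ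
        exact ⟨τ, hτS, (ENNReal.lt_add_of_sub_lt_right (Or.inl hvt) hτv).le⟩
    choose τ hτS hτv using hch
    set σc : List S → S → ℝ≥0∞ :=
      fun h u => if h.length ≤ n then σ h u else τ (h.getD n s₀) (h.drop n) u with hσcdef
    have hσcS : IsStrategy isCtrl succ σc := by
      intro h s hs
      by_cases hlen : h.length + 1 ≤ n
      · have e : ∀ u, σc (h ++ [s]) u = σ (h ++ [s]) u := by
          intro u
          simp only [hσcdef]
          rw [if_pos (by simp; omega)]
        obtain ⟨h1, h2⟩ := hσ h s hs
        exact ⟨by rw [tsum_congr e]; exact h1, fun u hu => h2 u (by rwa [e u] at hu)⟩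
      · have hdrop : (h ++ [s]).drop n = h.drop n ++ [s] :=
          List.drop_append_of_le_length (by omega)
        have e : ∀ u, σc (h ++ [s]) u = τ ((h ++ [s]).getD n s₀) (h.drop n ++ [s]) u := by
          intro u
          simp only [hσcdef]
          rw [if_neg (by simp; omega), hdrop]
        obtain ⟨h1, h2⟩ := hτS ((h ++ [s]).getD n s₀) (h.drop n) s hs
        exact ⟨by rw [tsum_congr e]; exact h1, fun u hu => h2 u (by rwa [e u] at hu)⟩
    haveI := hprob s₀ σc
    have hpv : ∀ v : Fin (n+1) → S,
        Pm s₀ σc (cyl (fext n v) n) = Pm s₀ σ (cyl (fext n v) n) := by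
      intro v
      rw [hind s₀ σc hσcS n (fext n v), hind s₀ σ hσ n (fext n v)]
      congr 1
      apply pathProb_congr _ _ _ _ n (fun i _ => rfl)
      intro k hk x
      exact extStep_congr isCtrl tr σc σ (by simp)
        (fun y => by simp only [hσcdef]; rw [if_pos (by simp; omega)]) x
    have hkey : ∀ v : Fin (n+1) → S,
        Pm (fext n v n) (fun h u => σc ((List.range n).map (fext n v) ++ h) u) φ
          = Pm (fext n v n) (τ (fext n v n)) φ := by
      intro v
      have hσcvS : IsStrategy isCtrl succ
          (fun h u => σc ((List.range n).map (fext n v) ++ h) u) :=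
        isStrategy_append hσcS _
      haveI := hprob (fext n v n) (fun h u => σc ((List.range n).map (fext n v) ++ h) u)
      haveI := hprob (fext n v n) (τ (fext n v n))
      have hmeq : Pm (fext n v n) (fun h u => σc ((List.range n).map (fext n v) ++ h) u)
          = Pm (fext n v n) (τ (fext n v n)) := by
        apply ext_cyl htop
        · rw [measure_univ, measure_univ]
        · intro u m
          rw [hind _ _ hσcvS m u, hind _ _ (hτS (fext n v n)) m u]
          by_cases hu : u 0 = fext n v n
          · congr 1
            apply pathProb_congr _ _ u u m (fun _ _ => rfl)
            intro k hk x
            apply extStep_congr isCtrl tr _ _ (by simp) _ x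
            intro y
            simp only [hσcdef]
            rw [if_neg (by simp)]
            congr 1
            · show ((List.range n).map (fext n v) ++ (List.range (k+1)).map u).getD n s₀
                = fext n v n
              rw [List.getD_eq_getElem?_getD, List.getElem?_append_right (by simp)]
              simp [List.getElem?_range, hu]
            · show ((List.range n).map (fext n v) ++ (List.range (k+1)).map u).drop n
                = (List.range (k+1)).map u
              exact List.drop_left' (by simp)
          · rw [if_neg hu]
            simp
      rw [hmeq]
    have hL' : ∀ v : Fin (n+1) → S, Pm s₀ σc (φ ∩ cyl (fext n v) n)
        = Pm (fext n v n) (fun h u => σc ((List.range n).map (fext n v) ++ h) u) φ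
          * Pm s₀ σ (cyl (fext n v) n) := by
      intro v
      have hL := condL htop isCtrl succ tr Pm hprob hind s₀ σc hσcS n (fext n v) φ hφmeas
      rw [hφshift n] at hL
      rw [hL, hpv v]
    have hone : ∑' v : Fin (n+1) → S, Pm s₀ σ (cyl (fext n v) n) = 1 := by
      have h := decomp htop (Pm s₀ σ) n Set.univ MeasurableSet.univ
      simp only [Set.univ_inter] at h
      rw [measure_univ] at h
      exact h.symm
    calc ∑' v : Fin (n+1) → S, val (fext n v n) * Pm s₀ σ (cyl (fext n v) n)
        ≤ ∑' v : Fin (n+1) → S,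
            (Pm (fext n v n) (τ (fext n v n)) φ + (ε : ℝ≥0∞)) * Pm s₀ σ (cyl (fext n v) n) :=
          ENNReal.tsum_le_tsum fun v => mul_le_mul_left (hτv (fext n v n)) _
      _ = ∑' v : Fin (n+1) → S,
            Pm (fext n v n) (τ (fext n v n)) φ * Pm s₀ σ (cyl (fext n v) n)
          + (ε : ℝ≥0∞) * ∑' v : Fin (n+1) → S, Pm s₀ σ (cyl (fext n v) n) := by
          rw [← ENNReal.tsum_mul_left, ← ENNReal.tsum_add]
          exact tsum_congr fun v => by ring
      _ = Pm s₀ σc φ + (ε : ℝ≥0∞) := by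
          rw [hone, mul_one]
          congr 1
          rw [decomp htop (Pm s₀ σc) n φ hφmeas]
          exact (tsum_congr fun v => by rw [hL', hkey]).symm
      _ ≤ val s₀ + (ε : ℝ≥0∞) := by
          apply add_le_add_left
          rw [hval s₀]
          exact le_iSup₂ (f := fun σ' (_ : IsStrategy isCtrl succ σ') => Pm s₀ σ' φ) σc hσcS
  -- pointwise equality
  have hsum_eq : ∑' v : Fin (n+1) → S, Pm s₀ σ (φ ∩ cyl (fext n v) n)
      = ∑' v : Fin (n+1) → S, val (fext n v n) * Pm s₀ σ (cyl (fext n v) n) :=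
    le_antisymm (ENNReal.tsum_le_tsum hFG) (hGsum.trans hFsum.ge)
  have hpoint : ∀ v : Fin (n+1) → S,
      val (fext n v n) * Pm s₀ σ (cyl (fext n v) n) ≤ Pm s₀ σ (φ ∩ cyl (fext n v) n) := by
    intro v
    set F : (Fin (n+1) → S) → ℝ≥0∞ := fun v => Pm s₀ σ (φ ∩ cyl (fext n v) n) with hF
    set G : (Fin (n+1) → S) → ℝ≥0∞ :=
      fun v => val (fext n v n) * Pm s₀ σ (cyl (fext n v) n) with hG
    have h1 := ENNReal.tsum_eq_add_tsum_ite (f := F) v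
    have h2 := ENNReal.tsum_eq_add_tsum_ite (f := G) v
    have hc : (∑' x, @ite ℝ≥0∞ (x = v) (Classical.propDecidable (x = v)) 0 (G x)) ≠ ∞ := by
      have hle : (∑' x, @ite ℝ≥0∞ (x = v) (Classical.propDecidable (x = v)) 0 (G x))
          ≤ ∑' x, G x := by
        refine ENNReal.tsum_le_tsum fun x => ?_
        by_cases h : x = v
        · simp [h]
        · simp [h]
      exact ((hle.trans (hGsum.trans (hval1 s₀))).trans_lt ENNReal.one_lt_top).ne
    have hstep : G v + (∑' x, @ite ℝ≥0∞ (x = v) (Classical.propDecidable (x = v)) 0 (G x))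
        ≤ F v + (∑' x, @ite ℝ≥0∞ (x = v) (Classical.propDecidable (x = v)) 0 (G x)) := by
      calc G v + (∑' x, @ite ℝ≥0∞ (x = v) (Classical.propDecidable (x = v)) 0 (G x))
          = ∑' x, G x := h2.symm
        _ = ∑' x, F x := hsum_eq.symm
        _ = F v + (∑' x, @ite ℝ≥0∞ (x = v) (Classical.propDecidable (x = v)) 0 (F x)) := h1
        _ ≤ F v + (∑' x, @ite ℝ≥0∞ (x = v) (Classical.propDecidable (x = v)) 0 (G x)) := by
            refine add_le_add_right (ENNReal.tsum_le_tsum fun x => ?_) _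
            by_cases h : x = v
            · simp [h]
            · simpa [h] using hFG x
    exact (ENNReal.add_le_add_iff_right hc).mp hstep
  have hfin : Pm s₀ σ (φ ∩ cyl (fext n (fun j : Fin (n+1) => w j)) n)
      = val (fext n (fun j : Fin (n+1) => w j) n)
        * Pm s₀ σ (cyl (fext n (fun j : Fin (n+1) => w j)) n) :=
    le_antisymm (hFG _) (hpoint _)
  have hcylw : cyl (fext n (fun j : Fin (n+1) => w j)) n = cyl w n :=
    (cyl_congr fun i hi => by rw [fext_eq _ hi]).symm
  have hwn : fext n (fun j : Fin (n+1) => w j) n = w n := by rw [fext_eq _ le_rfl]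
  rw [hcylw, hwn] at hfin
  exact hfin
end

section
/- Let M be a countable MDP, φ a prefix-independent objective, and σ an optimal strategy from s_0 for φ. Then for every partial play s_0⋯s_n induced by σ with positive probability: (a) val(s_n) = ∑_{s'} σ̄(s_0⋯s_n)(s') · val(s'), where σ̄ extends σ by the MDP's transition probabilities at random states; and (b) if s_n is a controller state then val(s') = val(s_n) for every s' in the support of σ(s_0⋯s_n). -/
open MeasureTheory
open scoped ENNReal

set_option linter.unusedSectionVars false
set_option linter.unnecessarySimpa false
set_option maxHeartbeats 1000000

namespace Stmt9Aux

variable {S : Type*}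

lemma cyl_congr {w w' : ℕ → S} {n : ℕ} (h : ∀ i ≤ n, w i = w' i) : cyl w n = cyl w' n := by
  ext ω
  constructor <;> intro hω i hi
  · rw [← h i hi]; exact hω i hi
  · rw [h i hi]; exact hω i hi

lemma map_range_congr {w w' : ℕ → S} {n : ℕ} (h : ∀ i ≤ n, w i = w' i) (m : ℕ) (hm : m ≤ n + 1) :
    (List.range m).map w = (List.range m).map w' := by
  apply List.map_congr_left
  intro a ha
  have := List.mem_range.mp ha
  exact h a (by omega)

lemma pathProb_congr (step : List S → S → ℝ≥0∞) {w w' : ℕ → S} {n : ℕ}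
    (h : ∀ i ≤ n, w i = w' i) : pathProb step w n = pathProb step w' n := by
  induction n with
  | zero => rfl
  | succ k ih =>
    have h' : ∀ i ≤ k, w i = w' i := fun i hi => h i (Nat.le_succ_of_le hi)
    rw [pathProb, pathProb, ih h',
      map_range_congr h (k + 1) (by omega), h (k + 1) le_rfl]

lemma map_range_succ (w : ℕ → S) (n : ℕ) :
    (List.range (n + 1)).map w = (List.range n).map w ++ [w n] := by
  rw [List.range_succ, List.map_append, List.map_cons, List.map_nil]

lemma pathProb_split1 (step : List S → S → ℝ≥0∞) (v : ℕ → S) (k : ℕ) :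
    pathProb step v (1 + k) =
      pathProb step v 1 * pathProb (fun g => step (v 0 :: g)) (fun i => v (i + 1)) k := by
  induction k with
  | zero => simp [pathProb]
  | succ k ih =>
    have h1 : 1 + (k + 1) = (1 + k) + 1 := by omega
    have hl : (List.range (1 + k + 1)).map v
        = v 0 :: (List.range (k + 1)).map (fun i => v (i + 1)) := by
      rw [show 1 + k + 1 = (k + 1) + 1 from by omega, List.range_succ_eq_map,
        List.map_cons, List.map_map]
      rfl
    have hv : v (1 + k + 1) = v (k + 1 + 1) := by congr 1; omega
    rw [h1, pathProb, ih, pathProb, mul_assoc, hl, hv]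
    simp [pathProb]
section Meas

variable [MeasurableSpace S]

lemma getD_concat_length (l : List S) (x d : S) : (l ++ [x]).getD l.length d = x := by
  rw [List.getD_eq_getElem?_getD, List.getElem?_concat_length]
  rfl

lemma measurableSet_cyl (mall : ∀ A : Set S, MeasurableSet A) (w : ℕ → S) (n : ℕ) :
    MeasurableSet (cyl w n) := by
  have : cyl w n = ⋂ (i : ℕ) (_ : i ≤ n), (fun ω : ℕ → S => ω i) ⁻¹' {w i} := by
    ext ω; simp [cyl, Set.mem_iInter]
  rw [this]
  exact MeasurableSet.iInter fun i => MeasurableSet.iInter fun _ =>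
    (measurable_pi_apply i) (mall {w i})

lemma measurable_shift : Measurable (fun (ω : ℕ → S) (k : ℕ) => ω (k + 1)) :=
  measurable_pi_lambda _ fun k => measurable_pi_apply (k + 1)

lemma isPiSystem_cyl : IsPiSystem {A : Set (ℕ → S) | ∃ w n, A = cyl w n} := by
  have key : ∀ (w v : ℕ → S) (n m : ℕ), n ≤ m → (cyl w n ∩ cyl v m).Nonempty →
      cyl w n ∩ cyl v m = cyl v m := by
    intro w v n m hnm ⟨ω, hω1, hω2⟩
    apply Set.inter_eq_right.mpr
    intro ω' hω' i hi
    rw [hω' i (le_trans hi hnm), ← hω2 i (le_trans hi hnm), hω1 i hi]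
  rintro A ⟨w, n, rfl⟩ B ⟨v, m, rfl⟩ hne
  rcases le_total n m with h | h
  · rw [key w v n m h hne]; exact ⟨v, m, rfl⟩
  · rw [Set.inter_comm] at hne ⊢
    rw [key v w m n h hne]; exact ⟨w, n, rfl⟩

lemma pi_eq_generateFrom_cyl [Countable S] (mall : ∀ A : Set S, MeasurableSet A) :
    (inferInstance : MeasurableSpace (ℕ → S)) =
      MeasurableSpace.generateFrom {A : Set (ℕ → S) | ∃ w n, A = cyl w n} := by
  set G := MeasurableSpace.generateFrom {A : Set (ℕ → S) | ∃ w n, A = cyl w n} with hG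
  apply le_antisymm
  · -- pi ≤ G
    have hcoord : ∀ (i : ℕ) (x : S), G.MeasurableSet' {ω : ℕ → S | ω i = x} := by
      intro i x
      have hset : {ω : ℕ → S | ω i = x}
          = ⋃ (l : List S) (_ : l.length = i), cyl (fun k => (l ++ [x]).getD k x) i := by
        ext ω
        simp only [Set.mem_setOf_eq, Set.mem_iUnion]
        constructor
        · intro hω
          refine ⟨(List.range i).map ω, by simp, ?_⟩
          intro k hk
          show ω k = (List.map ω (List.range i) ++ [x]).getD k x
          rcases lt_or_eq_of_le hk with hk' | hk'
          · rw [List.getD_eq_getElem?_getD, List.getElem?_append_left (by simp [hk'])]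
            simp [List.getElem?_map, List.getElem?_range, hk']
          · subst hk'
            have hlen : (List.map ω (List.range k)).length = k := by simp
            have hx := getD_concat_length (List.map ω (List.range k)) x x
            rw [hlen] at hx
            rw [hx, hω]
        · rintro ⟨l, hl, hω⟩
          have h2 := hω i le_rfl
          have hx := getD_concat_length l x x
          rw [hl] at hx
          show ω i = x
          rw [h2]
          exact hx
      rw [hset]
      refine MeasurableSet.iUnion fun l => MeasurableSet.iUnion fun _ =>
        MeasurableSpace.measurableSet_generateFrom ⟨_, i, rfl⟩
    show MeasurableSpace.pi ≤ G
    rw [MeasurableSpace.pi]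
    apply iSup_le
    intro i
    rintro B ⟨A, _, rfl⟩
    have : (fun ω : ℕ → S => ω i) ⁻¹' A = ⋃ x ∈ A, {ω : ℕ → S | ω i = x} := by
      ext ω; simp
    rw [this]
    exact MeasurableSet.biUnion (Set.to_countable A) fun x _ => hcoord i x
  · -- G ≤ pi
    apply MeasurableSpace.generateFrom_le
    rintro A ⟨w, n, rfl⟩
    exact measurableSet_cyl mall w n

lemma ext_of_cyl [Countable S] (mall : ∀ A : Set S, MeasurableSet A)
    (μ ν : Measure (ℕ → S)) [IsProbabilityMeasure μ] [IsProbabilityMeasure ν]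
    (h : ∀ (w : ℕ → S) (n : ℕ), μ (cyl w n) = ν (cyl w n)) : μ = ν := by
  refine ext_of_generate_finite _ (pi_eq_generateFrom_cyl mall) isPiSystem_cyl ?_ ?_
  · rintro A ⟨w, n, rfl⟩; exact h w n
  · simp

end Meas


section Tsum

lemma finset_sum_iSup_le {I : Type*} [Nonempty I] (F : S → I → ℝ≥0∞) (fs : Finset S) :
    (∑ u ∈ fs, ⨆ i, F u i) ≤ ⨆ c : S → I, ∑ u ∈ fs, F u (c u) := by
  classical
  induction fs using Finset.induction_on with
  | empty => simpa using zero_le _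
  | @insert a s ha ih =>
    rw [Finset.sum_insert ha]
    calc (⨆ i, F a i) + ∑ u ∈ s, ⨆ i, F u i
        ≤ (⨆ i, F a i) + ⨆ c : S → I, ∑ u ∈ s, F u (c u) := add_le_add le_rfl ih
      _ = ⨆ i, ⨆ c : S → I, (F a i + ∑ u ∈ s, F u (c u)) := by
          rw [ENNReal.iSup_add]
          exact iSup_congr fun i => by rw [ENNReal.add_iSup]
      _ ≤ ⨆ c : S → I, ∑ u ∈ insert a s, F u (c u) := by
          apply iSup_le; intro i; apply iSup_le; intro c
          refine le_iSup_of_le (Function.update c a i) ?_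
          rw [Finset.sum_insert ha, Function.update_self]
          have hs : ∑ u ∈ s, F u (Function.update c a i u) = ∑ u ∈ s, F u (c u) :=
            Finset.sum_congr rfl fun u hu => by
              rw [Function.update_of_ne (ne_of_mem_of_not_mem hu ha)]
          rw [hs]

lemma tsum_iSup_le {I : Type*} [Nonempty I] (F : S → I → ℝ≥0∞) :
    (∑' u, ⨆ i, F u i) ≤ ⨆ c : S → I, ∑' u, F u (c u) := by
  rw [ENNReal.tsum_eq_iSup_sum]
  apply iSup_le
  intro fs
  refine le_trans (finset_sum_iSup_le F fs) (iSup_mono fun c => ?_)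
  exact ENNReal.sum_le_tsum fs

lemma tsum_eq_of_forall_le {f g : S → ℝ≥0∞} (hle : ∀ u, f u ≤ g u)
    (heq : ∑' u, f u = ∑' u, g u) (hfin : (∑' u, g u) ≠ ⊤) (u : S) : f u = g u := by
  by_contra hne
  exact absurd heq
    (ne_of_lt (ENNReal.tsum_lt_tsum (heq ▸ hfin) hle (lt_of_le_of_ne (hle u) hne)))

end Tsum

section Phase1

variable [Countable S] [MeasurableSpace S]
variable {isCtrl : S → Prop} {succ : S → S → Prop} {tr : S → S → ℝ≥0∞}
variable {Pm : S → (List S → S → ℝ≥0∞) → Measure (ℕ → S)}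

lemma sep_of_hind
    (hind : ∀ (s : S) (σ' : List S → S → ℝ≥0∞), IsStrategy isCtrl succ σ' →
      IsInduced (Pm s σ') s (extStep isCtrl tr σ'))
    {σ : List S → S → ℝ≥0∞} (hσ : IsStrategy isCtrl succ σ)
    (s t : S) (hst : s ≠ t) : ∃ C : Set S, MeasurableSet C ∧ s ∈ C ∧ t ∉ C := by
  classical
  by_contra hc
  push_neg at hc
  have hiff : ∀ C : Set S, MeasurableSet C → (s ∈ C ↔ t ∈ C) := by
    intro C hC
    constructor
    · exact hc C hC
    · intro ht
      by_contra hs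
      exact (hc Cᶜ hC.compl hs) ht
  set e := Equiv.swap s t with he_def
  have hpre : ∀ C : Set S, MeasurableSet C → (e : S → S) ⁻¹' C = C := by
    intro C hC
    ext x
    rcases eq_or_ne x s with rfl | hxs
    · show e x ∈ C ↔ x ∈ C
      rw [he_def, Equiv.swap_apply_left]
      exact (hiff C hC).symm
    · rcases eq_or_ne x t with rfl | hxt
      · show e x ∈ C ↔ x ∈ C
        rw [he_def, Equiv.swap_apply_right]
        exact hiff C hC
      · show e x ∈ C ↔ x ∈ C
        rw [he_def, Equiv.swap_apply_of_ne_of_ne hxs hxt]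
  set E : (ℕ → S) → (ℕ → S) := fun ω k => e (ω k) with hE_def
  have hE : ∀ B : Set (ℕ → S), MeasurableSet B → E ⁻¹' B = B := by
    intro B hB
    let m2 : MeasurableSpace (ℕ → S) :=
      { MeasurableSet' := fun B => MeasurableSet B ∧ E ⁻¹' B = B
        measurableSet_empty := ⟨MeasurableSet.empty, by simp⟩
        measurableSet_compl := fun A ⟨hA, hEA⟩ =>
          ⟨hA.compl, by rw [Set.preimage_compl, hEA]⟩
        measurableSet_iUnion := fun f hf =>
          ⟨MeasurableSet.iUnion fun i => (hf i).1, by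
            rw [Set.preimage_iUnion]
            exact Set.iUnion_congr fun i => (hf i).2⟩ }
    have hle : (MeasurableSpace.pi : MeasurableSpace (ℕ → S)) ≤ m2 := by
      rw [MeasurableSpace.pi]
      apply iSup_le
      intro i
      rintro B ⟨A, hA, rfl⟩
      refine ⟨(measurable_pi_apply i) hA, ?_⟩
      have : E ⁻¹' ((fun ω : ℕ → S => ω i) ⁻¹' A)
          = (fun ω : ℕ → S => ω i) ⁻¹' ((e : S → S) ⁻¹' A) := rfl
      rw [this, hpre A hA]
    exact (hle B hB).2
  have hcyl0 : ∀ x : S, cyl (fun _ => x) 0 = {ω : ℕ → S | ω 0 = x} := by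
    intro x
    ext ω
    simp [cyl, Nat.le_zero]
  have hμ := hind s σ hσ
  have h1 : Pm s σ {ω : ℕ → S | ω 0 = s} = 1 := by
    have := hμ 0 (fun _ => s)
    rw [hcyl0 s] at this
    simpa [pathProb] using this
  have h2 : Pm s σ {ω : ℕ → S | ω 0 = t} = 0 := by
    have := hμ 0 (fun _ => t)
    rw [hcyl0 t] at this
    simpa [pathProb, hst.symm] using this
  set B := toMeasurable (Pm s σ) {ω : ℕ → S | ω 0 = t} with hB_def
  have hBm : MeasurableSet B := measurableSet_toMeasurable _ _
  have hB0 : Pm s σ B = 0 := by rw [hB_def, measure_toMeasurable]; exact h2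
  have hsub : {ω : ℕ → S | ω 0 = s} ⊆ B := by
    intro ω hω
    have hEω : E ω ∈ {ω : ℕ → S | ω 0 = t} := by
      show e (ω 0) = t
      rw [hω, he_def, Equiv.swap_apply_left]
    have hωB : E ω ∈ B := subset_toMeasurable _ _ hEω
    have := hE B hBm
    rw [← this]
    exact hωB
  have : (1 : ℝ≥0∞) ≤ 0 := by
    rw [← h1, ← hB0]
    exact measure_mono hsub
  simp at this

lemma mall_of_hind
    (hind : ∀ (s : S) (σ' : List S → S → ℝ≥0∞), IsStrategy isCtrl succ σ' →
      IsInduced (Pm s σ') s (extStep isCtrl tr σ'))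
    {σ : List S → S → ℝ≥0∞} (hσ : IsStrategy isCtrl succ σ) :
    ∀ A : Set S, MeasurableSet A := by
  have hsep := sep_of_hind hind hσ
  choose C hCm hCs hCt using hsep
  have hsing : ∀ s : S, MeasurableSet {s} := by
    intro s
    have hset : {s} = ⋂ (t : S), ⋂ (h : s ≠ t), C s t h := by
      ext x
      simp only [Set.mem_singleton_iff, Set.mem_iInter]
      constructor
      · rintro rfl t h
        exact hCs x t h
      · intro hx
        by_contra hxs
        exact hCt s x (fun h => hxs h.symm) (hx x (fun h => hxs h.symm))
    rw [hset]
    exact MeasurableSet.iInter fun t => MeasurableSet.iInter fun h => hCm s t h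
  intro A
  have : A = ⋃ x ∈ A, {x} := by simp
  rw [this]
  exact MeasurableSet.biUnion (Set.to_countable A) fun x _ => hsing x

end Phase1


section MDP

variable [Countable S] [MeasurableSpace S]
variable {isCtrl : S → Prop} {succ : S → S → Prop} {tr : S → S → ℝ≥0∞}
variable {Pm : S → (List S → S → ℝ≥0∞) → Measure (ℕ → S)}

/-- the path that starts at `s` and is constant `u` afterwards -/
def w2 (s u : S) : ℕ → S := fun j => if j = 0 then s else u

lemma isStrategy_shift {σ : List S → S → ℝ≥0∞} (hσ : IsStrategy isCtrl succ σ)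
    (pre : List S) : IsStrategy isCtrl succ (fun g => σ (pre ++ g)) := by
  intro h s hs
  simpa [List.append_assoc] using hσ (pre ++ h) s hs

lemma getLast?_map_range (w : ℕ → S) (n : ℕ) :
    (((List.range (n + 1)).map w)).getLast? = some (w n) := by
  rw [map_range_succ, List.getLast?_concat]

lemma extStep_congr (ρ ρ' : List S → S → ℝ≥0∞) (h : List S) (u : S)
    (hh : ρ h = ρ' h) : extStep isCtrl tr ρ h u = extStep isCtrl tr ρ' h u := by
  simp [extStep, hh]

lemma cyl_zero (x : S) : cyl (fun _ => x) 0 = {ω : ℕ → S | ω 0 = x} := by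
  ext ω
  simp [cyl, Nat.le_zero]

lemma measure_cyl2
    (hind : ∀ (s : S) (σ' : List S → S → ℝ≥0∞), IsStrategy isCtrl succ σ' →
      IsInduced (Pm s σ') s (extStep isCtrl tr σ'))
    {ρ : List S → S → ℝ≥0∞} (hρ : IsStrategy isCtrl succ ρ) (s u : S) :
    Pm s ρ (cyl (w2 s u) 1) = extStep isCtrl tr ρ [s] u := by
  have h := hind s ρ hρ 1 (w2 s u)
  have h0 : w2 s u 0 = s := by simp [w2]
  have h1 : w2 s u 1 = u := by simp [w2]
  have hmap : (List.range 1).map (w2 s u) = [s] := by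
    simp [List.range_succ, h0]
  rw [h, h0, if_pos rfl, one_mul]
  show pathProb (extStep isCtrl tr ρ) (w2 s u) (0 + 1) = _
  rw [pathProb, pathProb, one_mul, hmap, h1]

lemma measure_first
    (hind : ∀ (s : S) (σ' : List S → S → ℝ≥0∞), IsStrategy isCtrl succ σ' →
      IsInduced (Pm s σ') s (extStep isCtrl tr σ'))
    {ρ : List S → S → ℝ≥0∞} (hρ : IsStrategy isCtrl succ ρ) (s : S) :
    Pm s ρ {ω : ℕ → S | ω 0 = s} = 1 := by
  have h := hind s ρ hρ 0 (fun _ => s)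
  rw [cyl_zero s] at h
  simpa [pathProb] using h

/-- One-step partition of a measurable set according to the second state. -/
lemma onestep_partition
    (mall : ∀ A : Set S, MeasurableSet A)
    (hprob : ∀ s σ', IsProbabilityMeasure (Pm s σ'))
    (hind : ∀ (s : S) (σ' : List S → S → ℝ≥0∞), IsStrategy isCtrl succ σ' →
      IsInduced (Pm s σ') s (extStep isCtrl tr σ'))
    {ρ : List S → S → ℝ≥0∞} (hρ : IsStrategy isCtrl succ ρ) (s : S)
    (A : Set (ℕ → S)) (hA : MeasurableSet A) :
    Pm s ρ A = ∑' u, Pm s ρ (A ∩ cyl (w2 s u) 1) := by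
  haveI := hprob s ρ
  set T : Set (ℕ → S) := {ω : ℕ → S | ω 0 = s} with hT_def
  have hTm : MeasurableSet T := by
    have : T = (fun ω : ℕ → S => ω 0) ⁻¹' {s} := rfl
    rw [this]
    exact (measurable_pi_apply 0) (mall {s})
  have hT1 : Pm s ρ T = 1 := measure_first hind hρ s
  have hTc : Pm s ρ Tᶜ = 0 := by
    rw [measure_compl hTm (measure_ne_top _ _), hT1, measure_univ]
    simp
  have hd : Pm s ρ (A \ T) = 0 :=
    measure_mono_null (fun ω hω => hω.2) hTc
  have hsplit : Pm s ρ A = Pm s ρ (A ∩ T) := by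
    rw [← measure_inter_add_diff A hTm, hd, add_zero]
  have hunion : A ∩ T = ⋃ u, A ∩ cyl (w2 s u) 1 := by
    ext ω
    constructor
    · rintro ⟨hωA, hωT⟩
      refine Set.mem_iUnion.mpr ⟨ω 1, hωA, ?_⟩
      intro i hi
      interval_cases i
      · simpa [w2, hT_def] using hωT
      · simp [w2]
    · rintro hω
      rcases Set.mem_iUnion.mp hω with ⟨u, hωA, hωc⟩
      refine ⟨hωA, ?_⟩
      have := hωc 0 (by norm_num)
      simpa [w2, hT_def] using this
  have hdisj : Pairwise (Function.onFun Disjoint fun u => A ∩ cyl (w2 s u) 1) := by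
    intro u v huv
    refine Set.disjoint_left.mpr fun ω h1 h2 => huv ?_
    have e1 := h1.2 1 le_rfl
    have e2 := h2.2 1 le_rfl
    rw [e1] at e2
    simpa [w2] using e2
  rw [hsplit, hunion,
    measure_iUnion hdisj fun u => hA.inter (measurableSet_cyl mall _ 1)]

/-- Conditioning on the first step: shifting by one step. -/
lemma shift1
    (mall : ∀ A : Set S, MeasurableSet A)
    (hprob : ∀ s σ', IsProbabilityMeasure (Pm s σ'))
    (hind : ∀ (s : S) (σ' : List S → S → ℝ≥0∞), IsStrategy isCtrl succ σ' →
      IsInduced (Pm s σ') s (extStep isCtrl tr σ'))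
    {ρ ρ' : List S → S → ℝ≥0∞} (hρ : IsStrategy isCtrl succ ρ)
    (hρ' : IsStrategy isCtrl succ ρ')
    (s u : S)
    (hcomp : ∀ g : List S, g.head? = some u → ρ' g = ρ (s :: g))
    (A : Set (ℕ → S)) (hA : MeasurableSet A) :
    Pm s ρ ((fun ω (k : ℕ) => ω (k + 1)) ⁻¹' A ∩ cyl (w2 s u) 1)
      = extStep isCtrl tr ρ [s] u * Pm u ρ' A := by
  haveI := hprob s ρ
  haveI := hprob u ρ'
  set sh : (ℕ → S) → (ℕ → S) := fun ω k => ω (k + 1) with hsh_def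
  have hshm : Measurable sh := measurable_shift
  set e := extStep isCtrl tr ρ [s] u with he_def
  have hcylval : Pm s ρ (cyl (w2 s u) 1) = e := measure_cyl2 hind hρ s u
  by_cases he0 : e = 0
  · rw [he0, zero_mul]
    refine le_antisymm ?_ (zero_le)
    calc Pm s ρ (sh ⁻¹' A ∩ cyl (w2 s u) 1) ≤ Pm s ρ (cyl (w2 s u) 1) :=
          measure_mono Set.inter_subset_right
      _ = 0 := by rw [hcylval, he0]
  · have hetop : e ≠ ⊤ := by
      rw [← hcylval]; exact measure_ne_top _ _
    set ν : Measure (ℕ → S) := e⁻¹ • ((Pm s ρ).restrict (cyl (w2 s u) 1)).map sh with hν_def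
    have hν : ∀ B : Set (ℕ → S), MeasurableSet B →
        ν B = e⁻¹ * Pm s ρ (sh ⁻¹' B ∩ cyl (w2 s u) 1) := by
      intro B hB
      rw [hν_def, Measure.smul_apply, Measure.map_apply hshm hB,
        Measure.restrict_apply (hshm hB)]
      rfl
    have hνuniv : ν Set.univ = 1 := by
      rw [hν _ MeasurableSet.univ]
      simp only [Set.preimage_univ, Set.univ_inter]
      rw [hcylval]
      exact ENNReal.inv_mul_cancel he0 hetop
    haveI : IsProbabilityMeasure ν := ⟨hνuniv⟩
    have hνcyl : ∀ (x : ℕ → S) (k : ℕ), ν (cyl x k) = Pm u ρ' (cyl x k) := by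
      intro x k
      rw [hν _ (measurableSet_cyl mall x k), hind u ρ' hρ' k x]
      by_cases hx : x 0 = u
      · set spl : ℕ → S := fun j => if j = 0 then s else x (j - 1) with hspl_def
        have hset : sh ⁻¹' cyl x k ∩ cyl (w2 s u) 1 = cyl spl (1 + k) := by
          ext ω
          constructor
          · rintro ⟨hω1, hω2⟩
            intro j hj
            rcases Nat.eq_zero_or_pos j with rfl | hjpos
            · simpa [spl, w2] using hω2 0 (by norm_num)
            · obtain ⟨i, rfl⟩ : ∃ i, j = i + 1 := ⟨j - 1, by omega⟩
              have : ω (i + 1) = x i := hω1 i (by omega)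
              simpa [spl] using this
          · intro hω
            constructor
            · intro i hi
              have := hω (i + 1) (by omega)
              simpa [spl] using this
            · intro i hi
              interval_cases i
              · simpa [spl, w2] using hω 0 (by omega)
              · have := hω 1 (by omega)
                simp only [spl] at this
                simpa [w2, hx] using this
        have hspl0 : spl 0 = s := by simp [spl]
        have hspl1 : spl 1 = u := by simp [spl, hx]
        rw [hset, hind s ρ hρ (1 + k) spl, hspl0, if_pos rfl, one_mul,
          pathProb_split1]
        have hpp1 : pathProb (extStep isCtrl tr ρ) spl 1 = e := by
          show pathProb (extStep isCtrl tr ρ) spl (0 + 1) = e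
          rw [pathProb, pathProb, one_mul]
          have : (List.range 1).map spl = [s] := by simp [List.range_succ, hspl0]
          rw [this, hspl1, he_def]
        have hshiftfun : (fun i => spl (i + 1)) = x := by
          funext i
          simp [spl]
        have hsteps : pathProb (fun g => extStep isCtrl tr ρ (spl 0 :: g)) (fun i => spl (i + 1)) k
            = pathProb (extStep isCtrl tr ρ') x k := by
          rw [hshiftfun]
          clear hset
          induction k with
          | zero => rfl
          | succ m ih =>
            rw [pathProb, pathProb, ih]
            congr 1
            have hmap : (List.range (m + 1)).map x
                = x 0 :: (List.range m).map (fun i => x (i + 1)) := by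
              rw [List.range_succ_eq_map, List.map_cons, List.map_map]
              rfl
            have hgl : ((List.range (m + 1)).map x).getLast? = some (x m) :=
              getLast?_map_range x m
            have hgl' : (spl 0 :: (List.range (m + 1)).map x).getLast?
                = some (x m) := by
              rw [hmap, List.getLast?_cons_cons, ← hmap, hgl]
            have hcomp' : ρ' ((List.range (m + 1)).map x)
                = ρ (s :: (List.range (m + 1)).map x) := by
              apply hcomp
              rw [hmap]
              simp [hx]
            show extStep isCtrl tr ρ (spl 0 :: (List.range (m + 1)).map x) (x (m + 1))
                = extStep isCtrl tr ρ' ((List.range (m + 1)).map x) (x (m + 1))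
            rw [extStep, extStep, hgl, hgl']
            by_cases hc : isCtrl (x m)
            · simp only [if_pos hc]
              rw [hcomp', hspl0]
            · simp only [if_neg hc]
        rw [hpp1, hsteps, if_pos hx, one_mul, ← mul_assoc,
          ENNReal.inv_mul_cancel he0 hetop, one_mul]
      · have hset : sh ⁻¹' cyl x k ∩ cyl (w2 s u) 1 = ∅ := by
          ext ω
          simp only [Set.mem_inter_iff, Set.mem_empty_iff_false, iff_false]
          rintro ⟨hω1, hω2⟩
          have e1 : ω 1 = x 0 := hω1 0 (by omega)
          have e2 : ω 1 = u := by simpa [w2] using hω2 1 le_rfl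
          exact hx (by rw [← e1, e2])
        rw [hset, measure_empty, if_neg hx, zero_mul, mul_zero]
    have hνeq : ν = Pm u ρ' := ext_of_cyl mall ν (Pm u ρ') fun x k => hνcyl x k
    have hA' := hν A hA
    rw [hνeq] at hA'
    rw [he_def] at hA' ⊢
    calc Pm s ρ (sh ⁻¹' A ∩ cyl (w2 s u) 1)
        = extStep isCtrl tr ρ [s] u * (extStep isCtrl tr ρ [s] u)⁻¹
            * Pm s ρ (sh ⁻¹' A ∩ cyl (w2 s u) 1) := by
          rw [ENNReal.mul_inv_cancel he0 hetop, one_mul]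
      _ = extStep isCtrl tr ρ [s] u * Pm u ρ' A := by
          rw [mul_assoc, ← hA']

end MDP


section MDP2

variable [Countable S] [MeasurableSpace S]
variable {isCtrl : S → Prop} {succ : S → S → Prop} {tr : S → S → ℝ≥0∞}
variable {Pm : S → (List S → S → ℝ≥0∞) → Measure (ℕ → S)}

open Classical in
lemma extStep_eval (ρ : List S → S → ℝ≥0∞) (h : List S) (x : S)
    (hl : h.getLast? = some x) (u : S) :
    extStep isCtrl tr ρ h u = if isCtrl x then ρ h u else tr x u := by
  simp [extStep, hl]

lemma val_le_one
    (hprob : ∀ s σ', IsProbabilityMeasure (Pm s σ'))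
    {φ : Set (ℕ → S)} {val : S → ℝ≥0∞}
    (hval : ∀ s, val s =
      ⨆ (σ' : List S → S → ℝ≥0∞) (_ : IsStrategy isCtrl succ σ'), Pm s σ' φ)
    (s : S) : val s ≤ 1 := by
  rw [hval s]
  refine iSup₂_le fun σ' _ => ?_
  haveI := hprob s σ'
  exact prob_le_one

lemma onestep_le_val
    (mall : ∀ A : Set S, MeasurableSet A)
    (hprob : ∀ s σ', IsProbabilityMeasure (Pm s σ'))
    (hind : ∀ (s : S) (σ' : List S → S → ℝ≥0∞), IsStrategy isCtrl succ σ' →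
      IsInduced (Pm s σ') s (extStep isCtrl tr σ'))
    {φ : Set (ℕ → S)} (hφmeas : MeasurableSet φ) (hφ : PrefixIndep φ)
    {val : S → ℝ≥0∞}
    (hval : ∀ s, val s =
      ⨆ (σ' : List S → S → ℝ≥0∞) (_ : IsStrategy isCtrl succ σ'), Pm s σ' φ)
    {σ₀ : List S → S → ℝ≥0∞} (hσ₀ : IsStrategy isCtrl succ σ₀)
    {ρ : List S → S → ℝ≥0∞} (hρ : IsStrategy isCtrl succ ρ) (s : S) :
    (∑' u, extStep isCtrl tr ρ [s] u * val u) ≤ val s := by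
  classical
  have hφshift : (fun ω (k : ℕ) => ω (k + 1)) ⁻¹' φ = φ := by
    ext ω; exact hφ ω 1
  set I := {σ' : List S → S → ℝ≥0∞ // IsStrategy isCtrl succ σ'} with hI
  haveI : Nonempty I := ⟨⟨σ₀, hσ₀⟩⟩
  have hval' : ∀ x : S, val x = ⨆ i : I, Pm x i.1 φ := by
    intro x
    rw [hval x]
    exact (iSup_subtype (p := fun σ' => IsStrategy isCtrl succ σ')
      (f := fun i => Pm x i.1 φ)).symm
  have key : ∀ c : S → I,
      (∑' u, extStep isCtrl tr ρ [s] u * Pm u (c u).1 φ) ≤ val s := by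
    intro c
    set τ : List S → S → ℝ≥0∞ := fun h =>
      if h.length ≤ 1 then (if h = [s] then ρ [s] else σ₀ h)
      else (if h.head? = some s then (c (h.tail.headD s)).1 h.tail else σ₀ h) with hτ_def
    have hτ : IsStrategy isCtrl succ τ := by
      intro h' x hx
      cases h' with
      | nil =>
        by_cases hxs : x = s
        · subst hxs
          have hτe : τ ([] ++ [x]) = ρ [x] := by
            simp [hτ_def]
          rw [hτe]
          exact hρ [] x hx
        · have hτe : τ ([] ++ [x]) = σ₀ ([] ++ [x]) := by
            simp [hτ_def, hxs]
          rw [hτe]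
          exact hσ₀ [] x hx
      | cons a t =>
        have hlen : ¬ ((a :: t) ++ [x]).length ≤ 1 := by simp
        by_cases has : a = s
        · have hτe : τ ((a :: t) ++ [x]) = (c ((t ++ [x]).headD s)).1 (t ++ [x]) := by
            rw [hτ_def]
            simp [hlen, has]
          rw [hτe]
          exact (c ((t ++ [x]).headD s)).2 t x hx
        · have hτe : τ ((a :: t) ++ [x]) = σ₀ ((a :: t) ++ [x]) := by
            rw [hτ_def]
            simp [hlen, has]
          rw [hτe]
          exact hσ₀ (a :: t) x hx
    have hτs : τ [s] = ρ [s] := by simp [hτ_def]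
    have hee : ∀ u, extStep isCtrl tr τ [s] u = extStep isCtrl tr ρ [s] u :=
      fun u => extStep_congr τ ρ [s] u hτs
    have hterm : ∀ u, Pm s τ (φ ∩ cyl (w2 s u) 1)
        = extStep isCtrl tr ρ [s] u * Pm u (c u).1 φ := by
      intro u
      have hcompu : ∀ g : List S, g.head? = some u → (c u).1 g = τ (s :: g) := by
        intro g hg
        cases g with
        | nil => simp at hg
        | cons b t =>
          have hbu : b = u := by simpa using hg
          subst hbu
          have : τ (s :: b :: t) = (c b).1 (b :: t) := by
            rw [hτ_def]
            simp
          rw [this]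
      have h := shift1 mall hprob hind hτ (c u).2 s u hcompu φ hφmeas
      rw [hφshift, hee u] at h
      exact h
    calc (∑' u, extStep isCtrl tr ρ [s] u * Pm u (c u).1 φ)
        = ∑' u, Pm s τ (φ ∩ cyl (w2 s u) 1) := tsum_congr fun u => (hterm u).symm
      _ = Pm s τ φ := (onestep_partition mall hprob hind hτ s φ hφmeas).symm
      _ ≤ val s := by
          rw [hval s]
          exact le_iSup₂ (f := fun σ' (_ : IsStrategy isCtrl succ σ') => Pm s σ' φ) τ hτ
  calc (∑' u, extStep isCtrl tr ρ [s] u * val u)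
      = ∑' u, ⨆ i : I, extStep isCtrl tr ρ [s] u * Pm u i.1 φ := by
        refine tsum_congr fun u => ?_
        rw [hval' u, ENNReal.mul_iSup]
    _ ≤ ⨆ c : S → I, ∑' u, extStep isCtrl tr ρ [s] u * Pm u (c u).1 φ :=
        tsum_iSup_le _
    _ ≤ val s := iSup_le key

lemma step_eq
    (mall : ∀ A : Set S, MeasurableSet A)
    (hprob : ∀ s σ', IsProbabilityMeasure (Pm s σ'))
    (hind : ∀ (s : S) (σ' : List S → S → ℝ≥0∞), IsStrategy isCtrl succ σ' →
      IsInduced (Pm s σ') s (extStep isCtrl tr σ'))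
    {φ : Set (ℕ → S)} (hφmeas : MeasurableSet φ) (hφ : PrefixIndep φ)
    {val : S → ℝ≥0∞}
    (hval : ∀ s, val s =
      ⨆ (σ' : List S → S → ℝ≥0∞) (_ : IsStrategy isCtrl succ σ'), Pm s σ' φ)
    {σ₀ : List S → S → ℝ≥0∞} (hσ₀ : IsStrategy isCtrl succ σ₀)
    {ρ ρ2 : List S → S → ℝ≥0∞} (hρ : IsStrategy isCtrl succ ρ)
    (hρ2 : IsStrategy isCtrl succ ρ2)
    (s : S) (hcomp : ∀ g : List S, ρ2 g = ρ (s :: g))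
    (hQ : Pm s ρ φ = val s) :
    (val s = ∑' u, extStep isCtrl tr ρ [s] u * val u) ∧
      (∀ u, extStep isCtrl tr ρ [s] u ≠ 0 → Pm u ρ2 φ = val u) := by
  haveI := hprob s ρ
  have hφshift : (fun ω (k : ℕ) => ω (k + 1)) ⁻¹' φ = φ := by
    ext ω; exact hφ ω 1
  have h1 : Pm s ρ φ = ∑' u, extStep isCtrl tr ρ [s] u * Pm u ρ2 φ := by
    rw [onestep_partition mall hprob hind hρ s φ hφmeas]
    refine tsum_congr fun u => ?_
    have h := shift1 mall hprob hind hρ hρ2 s u (fun g _ => hcomp g) φ hφmeas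
    rw [hφshift] at h
    exact h
  have h2 : ∀ u, Pm u ρ2 φ ≤ val u := by
    intro u
    rw [hval u]
    exact le_iSup₂ (f := fun σ' (_ : IsStrategy isCtrl succ σ') => Pm u σ' φ) ρ2 hρ2
  have h3 : (∑' u, extStep isCtrl tr ρ [s] u * val u) ≤ val s :=
    onestep_le_val mall hprob hind hφmeas hφ hval hσ₀ hρ s
  have h4 : val s ≤ ∑' u, extStep isCtrl tr ρ [s] u * val u := by
    rw [← hQ, h1]
    exact ENNReal.tsum_le_tsum fun u => mul_le_mul_right (h2 u) _
  have ha : val s = ∑' u, extStep isCtrl tr ρ [s] u * val u := le_antisymm h4 h3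
  have hsums : (∑' u, extStep isCtrl tr ρ [s] u * Pm u ρ2 φ)
      = ∑' u, extStep isCtrl tr ρ [s] u * val u := by
    rw [← h1, hQ, ← ha]
  have hfin : (∑' u, extStep isCtrl tr ρ [s] u * val u) ≠ ⊤ := by
    rw [← ha]
    exact (lt_of_le_of_lt (val_le_one hprob hval s) ENNReal.one_lt_top).ne
  have hterm := tsum_eq_of_forall_le
    (fun u => mul_le_mul_right (h2 u) (extStep isCtrl tr ρ [s] u)) hsums hfin
  refine ⟨ha, fun u hu => ?_⟩
  have hetop : extStep isCtrl tr ρ [s] u ≠ ⊤ := by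
    rw [← measure_cyl2 hind hρ s u]
    exact measure_ne_top _ _
  exact (ENNReal.mul_right_inj hu hetop).mp (hterm u)

lemma main_Q
    (mall : ∀ A : Set S, MeasurableSet A)
    (hprob : ∀ s σ', IsProbabilityMeasure (Pm s σ'))
    (hind : ∀ (s : S) (σ' : List S → S → ℝ≥0∞), IsStrategy isCtrl succ σ' →
      IsInduced (Pm s σ') s (extStep isCtrl tr σ'))
    {φ : Set (ℕ → S)} (hφmeas : MeasurableSet φ) (hφ : PrefixIndep φ)
    {val : S → ℝ≥0∞}
    (hval : ∀ s, val s =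
      ⨆ (σ' : List S → S → ℝ≥0∞) (_ : IsStrategy isCtrl succ σ'), Pm s σ' φ)
    {σ : List S → S → ℝ≥0∞} (hσ : IsStrategy isCtrl succ σ)
    (s₀ : S) (hopt : Pm s₀ σ φ = val s₀) :
    ∀ (n : ℕ) (w : ℕ → S), w 0 = s₀ → Pm s₀ σ (cyl w n) ≠ 0 →
      Pm (w n) (fun g => σ ((List.range n).map w ++ g)) φ = val (w n) := by
  intro n
  induction n with
  | zero =>
    intro w hw0 _
    have hfun : (fun g => σ ((List.range 0).map w ++ g)) = σ := by
      funext g; simp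
    rw [hfun, hw0, hopt]
  | succ n ih =>
    intro w hw0 hpos
    have hsub : cyl w (n + 1) ⊆ cyl w n := fun ω hω i hi => hω i (by omega)
    have hposn : Pm s₀ σ (cyl w n) ≠ 0 := fun h0 =>
      hpos (le_antisymm (h0 ▸ measure_mono hsub) (zero_le))
    have hQ := ih w hw0 hposn
    have hρ : IsStrategy isCtrl succ (fun g => σ ((List.range n).map w ++ g)) :=
      isStrategy_shift hσ _
    have hρ2 : IsStrategy isCtrl succ (fun g => σ ((List.range (n + 1)).map w ++ g)) :=
      isStrategy_shift hσ _
    have hcomp : ∀ g : List S, (fun g => σ ((List.range (n + 1)).map w ++ g)) g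
        = (fun g => σ ((List.range n).map w ++ g)) (w n :: g) := by
      intro g
      show σ ((List.range (n + 1)).map w ++ g) = σ ((List.range n).map w ++ (w n :: g))
      rw [map_range_succ, List.append_assoc]
      rfl
    have hstep := step_eq mall hprob hind hφmeas hφ hval hσ hρ hρ2 (w n) hcomp hQ
    have hmeas1 := hind s₀ σ hσ (n + 1) w
    have hppos : pathProb (extStep isCtrl tr σ) w (n + 1) ≠ 0 := by
      intro h0
      apply hpos
      rw [hmeas1, h0, mul_zero]
    have hne : extStep isCtrl tr σ ((List.range (n + 1)).map w) (w (n + 1)) ≠ 0 := by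
      intro h0
      apply hppos
      show pathProb (extStep isCtrl tr σ) w n
          * extStep isCtrl tr σ ((List.range (n + 1)).map w) (w (n + 1)) = 0
      rw [h0, mul_zero]
    have hhist : (fun g => σ ((List.range n).map w ++ g)) [w n]
        = σ ((List.range (n + 1)).map w) := by
      show σ ((List.range n).map w ++ [w n]) = σ ((List.range (n + 1)).map w)
      rw [map_range_succ]
    have hee : ∀ x, extStep isCtrl tr (fun g => σ ((List.range n).map w ++ g)) [w n] x
        = extStep isCtrl tr σ ((List.range (n + 1)).map w) x := by
      intro x
      rw [extStep_eval _ [w n] (w n) (by simp) x,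
        extStep_eval σ _ (w n) (getLast?_map_range w n) x]
      by_cases hcw : isCtrl (w n)
      · rw [if_pos hcw, if_pos hcw]
        exact congrFun hhist x
      · rw [if_neg hcw, if_neg hcw]
    exact hstep.2 (w (n + 1)) (by rw [hee]; exact hne)

end MDP2

end Stmt9Aux

/-- Martingale property of the value along optimal plays: for a
prefix-independent objective `φ` and an optimal strategy `σ` from `s₀`, along
every positive-probability partial play `w 0 ⋯ w n` induced by `σ`:
(a) `val (w n)` is the `σ̄`-weighted average of the successor values, where
`σ̄` extends `σ` by the transition probabilities at random states; and
(b) if `w n` is a controller state then every successor in the support of `σ`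
has the same value as `w n`. -/
theorem stmt9 {S : Type*} [Countable S] [MeasurableSpace S]
    (isCtrl : S → Prop) (succ : S → S → Prop) (tr : S → S → ℝ≥0∞)
    (Pm : S → (List S → S → ℝ≥0∞) → Measure (ℕ → S))
    (hprob : ∀ s σ', IsProbabilityMeasure (Pm s σ'))
    (hind : ∀ (s : S) (σ' : List S → S → ℝ≥0∞), IsStrategy isCtrl succ σ' →
      IsInduced (Pm s σ') s (extStep isCtrl tr σ'))
    (φ : Set (ℕ → S)) (hφmeas : MeasurableSet φ) (hφ : PrefixIndep φ)
    (val : S → ℝ≥0∞)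
    (hval : ∀ s, val s =
      ⨆ (σ' : List S → S → ℝ≥0∞) (_ : IsStrategy isCtrl succ σ'), Pm s σ' φ)
    (s₀ : S) (σ : List S → S → ℝ≥0∞) (hσ : IsStrategy isCtrl succ σ)
    (hopt : Pm s₀ σ φ = val s₀)
    (n : ℕ) (w : ℕ → S) (hw0 : w 0 = s₀)
    (hpos : Pm s₀ σ (cyl w n) ≠ 0) :
    (val (w n) =
        ∑' u, extStep isCtrl tr σ ((List.range (n + 1)).map w) u * val u) ∧
      (isCtrl (w n) →
        ∀ u, σ ((List.range (n + 1)).map w) u ≠ 0 → val u = val (w n)) := by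
  
  classical
  have mall : ∀ A : Set S, MeasurableSet A := Stmt9Aux.mall_of_hind hind hσ
  have hQ := Stmt9Aux.main_Q mall hprob hind hφmeas hφ hval hσ s₀ hopt n w hw0 hpos
  set H := (List.range (n + 1)).map w with hH
  have hρ : IsStrategy isCtrl succ (fun g => σ ((List.range n).map w ++ g)) :=
    Stmt9Aux.isStrategy_shift hσ _
  have hρ2 : IsStrategy isCtrl succ (fun g => σ (H ++ g)) :=
    Stmt9Aux.isStrategy_shift hσ _
  have hHsplit : H = (List.range n).map w ++ [w n] := by
    rw [hH]; exact Stmt9Aux.map_range_succ w n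
  have hcomp : ∀ g : List S, (fun g => σ (H ++ g)) g
      = (fun g => σ ((List.range n).map w ++ g)) (w n :: g) := by
    intro g
    show σ (H ++ g) = σ ((List.range n).map w ++ (w n :: g))
    rw [hHsplit, List.append_assoc]
    rfl
  have hstep := Stmt9Aux.step_eq mall hprob hind hφmeas hφ hval hσ hρ hρ2 (w n) hcomp hQ
  have hhist : (fun g => σ ((List.range n).map w ++ g)) [w n] = σ H := by
    show σ ((List.range n).map w ++ [w n]) = σ H
    rw [hHsplit]
  have hgl : H.getLast? = some (w n) := by
    rw [hH]; exact Stmt9Aux.getLast?_map_range w n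
  have hee : ∀ x, extStep isCtrl tr (fun g => σ ((List.range n).map w ++ g)) [w n] x
      = extStep isCtrl tr σ H x := by
    intro x
    rw [Stmt9Aux.extStep_eval _ [w n] (w n) (by simp) x,
      Stmt9Aux.extStep_eval σ H (w n) hgl x]
    by_cases hcw : isCtrl (w n)
    · rw [if_pos hcw, if_pos hcw]
      exact congrFun hhist x
    · rw [if_neg hcw, if_neg hcw]
  have ha : val (w n) = ∑' u, extStep isCtrl tr σ H u * val u := by
    rw [hstep.1]
    exact tsum_congr fun u => by rw [hee u]
  refine ⟨ha, fun hc u₀ hne0 => ?_⟩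
  have hsum1 : (∑' u, σ H u) = 1 := by
    rw [hHsplit]
    exact (hσ ((List.range n).map w) (w n) hc).1
  have hsupp : ∀ x, σ H x ≠ 0 → succ (w n) x := by
    intro x hx
    refine (hσ ((List.range n).map w) (w n) hc).2 x ?_
    rw [← hHsplit]
    exact hx
  have hdir : ∀ x, succ (w n) x → val x ≤ val (w n) := by
    intro x hsx
    set τ : List S → S → ℝ≥0∞ := fun h y =>
      if h = [w n] then (if y = x then 1 else 0) else σ h y with hτ_def
    have hτ : IsStrategy isCtrl succ τ := by
      intro h' z hz
      by_cases hh : h' ++ [z] = [w n]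
      · have hz' : z = w n := by
          have h1 := List.getLast?_concat (l := h') (a := z)
          rw [hh] at h1
          have : some (w n) = some z := by simpa using h1
          exact (Option.some_injective _ this).symm
        constructor
        · have hτe : τ (h' ++ [z]) = fun y => if y = x then 1 else 0 := by
            funext y; rw [hτ_def]; simp [hh]
          rw [hτe]
          exact tsum_ite_eq x 1
        · intro u hu
          have hτe : τ (h' ++ [z]) u = if u = x then 1 else 0 := by
            rw [hτ_def]; simp [hh]
          rw [hτe] at hu
          have hux : u = x := by
            by_contra hux
            rw [if_neg hux] at hu
            exact hu rfl
          subst hux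
          rw [hz']
          exact hsx
      · have hτe : τ (h' ++ [z]) = σ (h' ++ [z]) := by
          funext y; rw [hτ_def]; simp [hh]
        rw [hτe]
        exact hσ h' z hz
    have h1 := Stmt9Aux.onestep_le_val mall hprob hind hφmeas hφ hval hσ hτ (w n)
    have heval : (∑' y, extStep isCtrl tr τ [w n] y * val y) = val x := by
      have hev : ∀ y, extStep isCtrl tr τ [w n] y * val y = if y = x then val x else 0 := by
        intro y
        rw [Stmt9Aux.extStep_eval τ [w n] (w n) (by simp) y, if_pos hc]
        have hτy : τ [w n] y = if y = x then 1 else 0 := by rw [hτ_def]; simp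
        rw [hτy]
        by_cases hyx : y = x
        · subst hyx; rw [if_pos rfl, if_pos rfl, one_mul]
        · rw [if_neg hyx, if_neg hyx, zero_mul]
      rw [tsum_congr hev]
      exact tsum_ite_eq x (fun _ => val x)
    rw [heval] at h1
    exact h1
  have hle0 : val u₀ ≤ val (w n) := hdir u₀ (hsupp u₀ hne0)
  by_contra hvne
  have hlt : val u₀ < val (w n) := lt_of_le_of_ne hle0 hvne
  have hsa : (∑' x, σ H x * val x) = val (w n) := by
    rw [ha]
    refine tsum_congr fun x => ?_
    rw [Stmt9Aux.extStep_eval σ H (w n) hgl x, if_pos hc]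
  have hfx : ∀ x, σ H x * val x ≤ σ H x * val (w n) := by
    intro x
    by_cases hx0 : σ H x = 0
    · rw [hx0, zero_mul, zero_mul]
    · exact mul_le_mul_right (hdir x (hsupp x hx0)) _
  have hstrict : σ H u₀ * val u₀ < σ H u₀ * val (w n) := by
    refine (ENNReal.mul_lt_mul_iff_right hne0 ?_).mpr hlt
    have hle1 : σ H u₀ ≤ 1 := hsum1 ▸ ENNReal.le_tsum u₀
    exact ne_top_of_le_ne_top ENNReal.one_ne_top hle1
  have hfin2 : (∑' x, σ H x * val x) ≠ ⊤ := by
    rw [hsa]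
    exact (lt_of_le_of_lt (Stmt9Aux.val_le_one hprob hval (w n)) ENNReal.one_lt_top).ne
  have hltsum := ENNReal.tsum_lt_tsum hfin2 hfx hstrict
  rw [hsa, ENNReal.tsum_mul_right, hsum1, one_mul] at hltsum
  exact lt_irrefl _ hltsum
end

section
/- In the conditioned MDP M* with reweighted random-transition probabilities P*(s)(s') = P(s)(s') · val(s')/val(s), for any strategy σ and any finite state sequence s_0 s_1 ⋯ s_n, the cylinder probabilities satisfy P_{M*,s_0,σ}(s_0⋯s_n S^ω) = P_{M,s_0,σ}(s_0⋯s_n S^ω) · val(s_n)/val(s_0). -/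
open MeasureTheory
open scoped ENNReal

open Classical in
/-- One-step function of the conditioned MDP `M*`: at controller states follow
`σ`, at random states reweight by `tr* s u = tr s u * val u / val s`. -/
noncomputable def stepStar {S : Type*} (isCtrl : S → Prop) (tr : S → S → ℝ≥0∞)
    (val : S → ℝ≥0∞) (σ : List S → S → ℝ≥0∞) : List S → S → ℝ≥0∞ := fun h u =>
  match h.getLast? with
  | none => 0
  | some s => if isCtrl s then σ h u else tr s u * val u / val s

/-- In the conditioned MDP `M*` (all states have positive finite value, `val`
is a martingale under the random transitions, and the strategy `σ` only makes
value-preserving controller moves), the cylinder probabilities satisfy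
`P_{M*,s₀,σ}(w 0 ⋯ w n S^ω) = P_{M,s₀,σ}(w 0 ⋯ w n S^ω) · val (w n) / val (w 0)`. -/
theorem stmt11 {S : Type*} [Countable S] [MeasurableSpace S]
    (isCtrl : S → Prop) (tr : S → S → ℝ≥0∞)
    (val : S → ℝ≥0∞)
    (hvalpos : ∀ s, val s ≠ 0) (hvalfin : ∀ s, val s ≠ ⊤)
    (hmart : ∀ s, ¬ isCtrl s → val s = ∑' u, tr s u * val u)
    (σ : List S → S → ℝ≥0∞)
    (hpres : ∀ (h : List S) (s u : S), h.getLast? = some s → isCtrl s →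
      σ h u ≠ 0 → val u = val s)
    (s₀ : S)
    (μ μstar : Measure (ℕ → S))
    (hμ : IsInduced μ s₀ (extStep isCtrl tr σ))
    (hμstar : IsInduced μstar s₀ (stepStar isCtrl tr val σ)) :
    ∀ (n : ℕ) (w : ℕ → S),
      μstar (cyl w n) = μ (cyl w n) * val (w n) / val (w 0) := by
  classical
  have key : ∀ (n : ℕ) (w : ℕ → S),
      pathProb (stepStar isCtrl tr val σ) w n
        = pathProb (extStep isCtrl tr σ) w n * val (w n) / val (w 0) := by
    intro n w
    induction n with
    | zero =>
      simp [pathProb, ENNReal.div_self (hvalpos _) (hvalfin _)]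
    | succ n ih =>
      have hlast : ((List.range (n + 1)).map w).getLast? = some (w n) := by
        rw [List.range_succ, List.map_append]
        simp
      simp only [pathProb, stepStar, extStep, hlast, ih]
      by_cases hc : isCtrl (w n)
      · simp only [hc, if_true]
        by_cases hz : σ ((List.range (n + 1)).map w) (w (n + 1)) = 0
        · simp [hz]
        · rw [hpres _ _ _ hlast hc hz]
          simp only [div_eq_mul_inv]
          ring
      · simp only [hc, if_false]
        simp only [div_eq_mul_inv, ENNReal.mul_inv (Or.inl (hvalpos (w n)))
          (Or.inl (hvalfin (w n)))]
        calc pathProb (extStep isCtrl tr σ) w n * val (w n) * (val (w 0))⁻¹ *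
              (tr (w n) (w (n + 1)) * val (w (n + 1)) * ((val (w n))⁻¹))
            = pathProb (extStep isCtrl tr σ) w n * tr (w n) (w (n + 1)) *
              val (w (n + 1)) * (val (w 0))⁻¹ * (val (w n) * (val (w n))⁻¹) := by ring
          _ = _ := by
            rw [ENNReal.mul_inv_cancel (hvalpos _) (hvalfin _), mul_one]
  intro n w
  rw [hμ n w, hμstar n w, key n w]
  simp only [div_eq_mul_inv]
  ring
end

section
/- In a countable Markov chain, let p be a state and π a finite path starting in p with strictly positive probability. Then for every initial state q, P_q(π is taken as an infix infinitely often) = P_q(p is visited infinitely often). -/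
open MeasureTheory
open scoped ENNReal

/-- Probability of traversing a finite path in a Markov chain with kernel `K`. -/
noncomputable def chainProb {S : Type*} (K : S → S → ℝ≥0∞) : List S → ℝ≥0∞
  | [] => 1
  | [_] => 1
  | a :: b :: rest => K a b * chainProb K (b :: rest)

namespace SF

variable {S : Type*}

lemma chainProb_cons_cons (K : S → S → ℝ≥0∞) (a b : S) (l : List S) :
    chainProb K (a :: b :: l) = K a b * chainProb K (b :: l) := rfl

lemma chainProb_singleton (K : S → S → ℝ≥0∞) (a : S) : chainProb K [a] = 1 := rfl

lemma chainProb_append (K : S → S → ℝ≥0∞) (d : S) :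
    ∀ (u : List S), u ≠ [] → ∀ v, chainProb K (u ++ v)
      = chainProb K u * chainProb K (u.getLastD d :: v)
  | [], h, v => absurd rfl h
  | [a], _, v => by simp [chainProb_singleton, List.getLastD]
  | a :: b :: u, _, v => by
      have ih := chainProb_append K d (b :: u) (by simp) v
      have h1 : (a :: b :: u).getLastD d = (b :: u).getLastD d := by
        simp [List.getLastD_cons]
      simp only [List.cons_append] at ih ⊢
      rw [chainProb_cons_cons, chainProb_cons_cons, ih, h1, mul_assoc]

lemma getLastD_app : ∀ (u : List S) (y d : S), (u ++ [y]).getLastD d = y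
  | [], y, d => rfl
  | a :: u, y, d => by
      rw [List.cons_append, List.getLastD_cons]; exact getLastD_app u y a

lemma chainProb_append_cons (K : S → S → ℝ≥0∞) (xs : List S) (y : S) (ys : List S) :
    chainProb K (xs ++ y :: ys) = chainProb K (xs ++ [y]) * chainProb K (y :: ys) := by
  rcases xs with _ | ⟨a, xs⟩
  · simp [chainProb_singleton]
  · have h := chainProb_append K y ((a :: xs) ++ [y]) (by simp) ys
    have h2 : ((a :: xs) ++ [y]).getLastD y = y := getLastD_app _ y y
    rw [h2] at h
    simpa using h

lemma chainProb_eq_prod (K : S → S → ℝ≥0∞) (d : S) :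
    ∀ (l : List S), l ≠ [] →
      chainProb K l = ∏ i ∈ Finset.range (l.length - 1), K (l.getD i d) (l.getD (i + 1) d)
  | [], h => absurd rfl h
  | [a], _ => by simp [chainProb_singleton]
  | a :: b :: l, _ => by
      have ih := chainProb_eq_prod K d (b :: l) (by simp)
      rw [chainProb_cons_cons, ih]
      have hlen : (a :: b :: l).length - 1 = ((b :: l).length - 1) + 1 := by
        simp
      rw [hlen, Finset.prod_range_succ']
      simp only [List.getD_cons_succ, List.getD_cons_zero]
      ring

variable {S : Type*}

lemma tsum_pi_succ {n : ℕ} (g : (Fin (n+1) → S) → ℝ≥0∞) :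
    ∑' t, g t = ∑' (u : S), ∑' (r : Fin n → S), g (Fin.cons u r) := by
  calc ∑' t, g t = ∑' (c : S × (Fin n → S)), g ((Fin.consEquiv (fun _ => S)) c) :=
        ((Fin.consEquiv (fun _ => S)).tsum_eq g).symm
    _ = ∑' (u : S) (r : Fin n → S), g (Fin.cons u r) :=
        ENNReal.tsum_prod (f := fun u r => g (Fin.cons u r))

lemma tsum_fin_zero (g : (Fin 0 → S) → ℝ≥0∞) : ∑' t, g t = g (fun i => i.elim0) := by
  rw [tsum_eq_single (fun i => i.elim0)]
  intro b hb
  exact absurd (funext fun i => i.elim0) hb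

lemma ofFn_cons {n : ℕ} (u : S) (r : Fin n → S) :
    List.ofFn (Fin.cons u r) = u :: List.ofFn r := by
  rw [List.ofFn_succ]
  simp

variable [Countable S] [DecidableEq S]

lemma sum_all (K : S → S → ℝ≥0∞) (hK : ∀ s, ∑' u, K s u = 1) :
    ∀ (n : ℕ) (s : S), ∑' t : Fin n → S, chainProb K (s :: List.ofFn t) = 1
  | 0, s => by
      rw [tsum_fin_zero]
      simp [chainProb_singleton]
  | n+1, s => by
      rw [tsum_pi_succ]
      calc ∑' (u : S), ∑' (r : Fin n → S), chainProb K (s :: List.ofFn (Fin.cons u r))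
          = ∑' (u : S), K s u * ∑' (r : Fin n → S), chainProb K (u :: List.ofFn r) := by
            refine tsum_congr fun u => ?_
            rw [← ENNReal.tsum_mul_left]
            refine tsum_congr fun r => ?_
            rw [ofFn_cons, chainProb_cons_cons]
        _ = ∑' (u : S), K s u := by
            refine tsum_congr fun u => ?_
            rw [sum_all K hK n u, mul_one]
        _ = 1 := hK s

/-- `HR tail s n`: mass of length-`n` no-`p` words continued by `tail`, started at `s`. -/
noncomputable def HR (K : S → S → ℝ≥0∞) (p : S) (tail : List S) (s : S) (n : ℕ) : ℝ≥0∞ :=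
  ∑' t : Fin n → S, if ∀ i, t i ≠ p then chainProb K (s :: (List.ofFn t ++ tail)) else 0

lemma HR_zero (K : S → S → ℝ≥0∞) (p : S) (tail : List S) (s : S) :
    HR K p tail s 0 = chainProb K (s :: tail) := by
  rw [HR, tsum_fin_zero]
  simp

lemma HR_succ (K : S → S → ℝ≥0∞) (p : S) (tail : List S) (s : S) (n : ℕ) :
    HR K p tail s (n+1) = ∑' u, if u = p then 0 else K s u * HR K p tail u n := by
  rw [HR, tsum_pi_succ]
  refine tsum_congr fun u => ?_
  by_cases hu : u = p
  · rw [if_pos hu]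
    have h0 : ∀ r : Fin n → S,
        (if ∀ i, (Fin.cons u r : Fin (n+1) → S) i ≠ p then
          chainProb K (s :: (List.ofFn (Fin.cons u r) ++ tail)) else 0) = 0 := by
      intro r
      rw [if_neg]
      intro h
      exact h 0 (by simpa using hu)
    rw [tsum_congr h0, tsum_zero]
  · rw [if_neg hu, HR, ← ENNReal.tsum_mul_left]
    refine tsum_congr fun r => ?_
    have hcond : (∀ i, (Fin.cons u r : Fin (n+1) → S) i ≠ p) ↔ (∀ i, r i ≠ p) := by
      rw [Fin.forall_fin_succ]
      simp [hu]
    rw [ofFn_cons]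
    by_cases hr : ∀ i, r i ≠ p
    · rw [if_pos (hcond.mpr hr), if_pos hr, List.cons_append, chainProb_cons_cons]
    · rw [if_neg (fun h => hr (hcond.mp h)), if_neg hr, mul_zero]


lemma hit_partial (K : S → S → ℝ≥0∞) (hK : ∀ s, ∑' u, K s u = 1) (p : S) :
    ∀ (G : ℕ) (s : S), (∑ n ∈ Finset.range G, HR K p [p] s n) + HR K p [] s G = 1
  | 0, s => by
      simp [HR_zero, chainProb_singleton]
  | G+1, s => by
      rw [Finset.sum_range_succ']
      have h1 : ∀ n ∈ Finset.range G, HR K p [p] s (n+1)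
          = ∑' u, (if u = p then 0 else K s u * HR K p [p] u n) :=
        fun n _ => HR_succ K p [p] s n
      rw [Finset.sum_congr rfl h1, ← Summable.tsum_finsetSum (fun i _ => ENNReal.summable), HR_succ]
      have h2 : HR K p [p] s 0 = K s p := by
        rw [HR_zero, chainProb_cons_cons, chainProb_singleton, mul_one]
      rw [h2]
      have key : (∑' u, ∑ n ∈ Finset.range G, (if u = p then 0 else K s u * HR K p [p] u n))
          + (∑' u, (if u = p then 0 else K s u * HR K p [] u G))
          = ∑' u, (if u = p then 0 else K s u) := by
        rw [← ENNReal.tsum_add]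
        refine tsum_congr fun u => ?_
        by_cases hu : u = p
        · simp [hu]
        · simp only [if_neg hu]
          rw [← Finset.mul_sum, ← mul_add, hit_partial K hK p G u, mul_one]
      rw [add_right_comm, key, add_comm, ← hK s]
      rw [ENNReal.tsum_eq_add_tsum_ite (f := K s) p]
      congr 1
      exact tsum_congr fun u => by by_cases h : u = p <;> simp [h]

lemma hit_le (K : S → S → ℝ≥0∞) (hK : ∀ s, ∑' u, K s u = 1) (p s : S) :
    ∑' n : ℕ, HR K p [p] s n ≤ 1 := by
  rw [ENNReal.tsum_eq_iSup_sum]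
  refine iSup_le fun F => ?_
  obtain ⟨G, hG⟩ := F.exists_nat_subset_range
  calc ∑ n ∈ F, HR K p [p] s n ≤ ∑ n ∈ Finset.range G, HR K p [p] s n :=
        Finset.sum_le_sum_of_subset hG
    _ ≤ 1 := by rw [← hit_partial K hK p G s]; exact le_self_add


abbrev Gap (S : Type*) (p : S) : Type _ := Σ n : ℕ, {t : Fin n → S // ∀ i, t i ≠ p}

abbrev FailT (S : Type*) (p : S) (ρ : List S) : Type _ :=
  {t : Fin ρ.length → S // t ≠ fun i => ρ.get i}

def Idx (S : Type*) (p : S) (ρ : List S) (N : ℕ) : ℕ → Type _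
  | 0 => Fin (N+1) → S
  | k+1 => Idx S p ρ N k × (Gap S p × FailT S p ρ)

instance IdxCountable {S : Type*} [Countable S] (p : S) (ρ : List S) (N : ℕ) :
    ∀ k, Countable (Idx S p ρ N k)
  | 0 => inferInstanceAs (Countable (Fin (N+1) → S))
  | k+1 =>
      have := IdxCountable p ρ N k
      inferInstanceAs (Countable (_ × _))

def wordOf {S : Type*} (p : S) (ρ : List S) (N : ℕ) : (k : ℕ) → Idx S p ρ N k → List S
  | 0, t => List.ofFn t
  | k+1, ⟨x, g, b⟩ => wordOf p ρ N k x ++ (List.ofFn g.2.1 ++ p :: List.ofFn b.1)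

lemma wordOf_zero {S : Type*} (p : S) (ρ : List S) (N : ℕ) (t : Idx S p ρ N 0) :
    wordOf p ρ N 0 t = List.ofFn t := rfl

lemma wordOf_succ {S : Type*} (p : S) (ρ : List S) (N : ℕ) (k : ℕ)
    (x : Idx S p ρ N k) (g : Gap S p) (b : FailT S p ρ) :
    wordOf p ρ N (k+1) (x, g, b) = wordOf p ρ N k x ++ (List.ofFn g.2.1 ++ p :: List.ofFn b.1) := rfl

lemma wordOf_len {S : Type*} (p : S) (ρ : List S) (N : ℕ) :
    ∀ k (x : Idx S p ρ N k), N+1 ≤ (wordOf p ρ N k x).length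
  | 0, t => by simp [wordOf]; exact Nat.lt_of_succ_le (List.length_ofFn (f := (t : Fin (N+1) → S))).ge
  | k+1, ⟨x, g, b⟩ => by
      rw [wordOf_succ, List.length_append]
      exact le_trans (wordOf_len p ρ N k x) (Nat.le_add_right _ _)

lemma wordOf_ne_nil {S : Type*} (p : S) (ρ : List S) (N : ℕ) (k : ℕ) (x : Idx S p ρ N k) :
    wordOf p ρ N k x ≠ [] := by
  have := wordOf_len p ρ N k x
  intro h
  rw [h] at this
  simp at this

lemma getD_ofFn {S : Type*} {n : ℕ} (f : Fin n → S) (d : S) (i : ℕ) (h : i < n) :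
    (List.ofFn f).getD i d = f ⟨i, h⟩ := by
  rw [List.getD_eq_getElem _ _ (by simpa using h), List.getElem_ofFn]

/-- The weight (probability) of the cylinder given by a finite word. -/
noncomputable def wt (K : S → S → ℝ≥0∞) (p q : S) (l : List S) : ℝ≥0∞ :=
  (if l.getD 0 p = q then 1 else 0) * chainProb K l

/-- Total mass of "failure blocks". -/
noncomputable def Fmass (K : S → S → ℝ≥0∞) (p : S) (ρ : List S) : ℝ≥0∞ :=
  ∑' b : FailT S p ρ, chainProb K (p :: List.ofFn b.1)

lemma Fmass_add (K : S → S → ℝ≥0∞) (hK : ∀ s, ∑' u, K s u = 1) (p : S) (ρ : List S) :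
    chainProb K (p :: ρ) + Fmass K p ρ = 1 := by
  have h := sum_all K hK ρ.length p
  rw [ENNReal.tsum_eq_add_tsum_ite (fun i => ρ.get i)] at h
  rw [List.ofFn_get] at h
  have h2 : Fmass K p ρ = (∑' t : Fin ρ.length → S,
      if t = (fun i => ρ.get i) then 0 else chainProb K (p :: List.ofFn t)) := by
    refine (tsum_subtype {t : Fin ρ.length → S | t ≠ fun i => ρ.get i}
      (fun t => chainProb K (p :: List.ofFn t))).trans ?_
    refine tsum_congr fun t => ?_
    by_cases ht : t = fun i => ρ.get i <;> simp [Set.indicator, ht]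
  rw [h2, ← h]
  congr 1
  exact tsum_congr fun t => by by_cases ht : t = fun i => ρ.get i <;> simp [ht]

lemma gap_le (K : S → S → ℝ≥0∞) (hK : ∀ s, ∑' u, K s u = 1) (p s : S) :
    ∑' g : Gap S p, chainProb K (s :: (List.ofFn g.2.1 ++ [p])) ≤ 1 := by
  have h : ∑' g : Gap S p, chainProb K (s :: (List.ofFn g.2.1 ++ [p]))
      = ∑' n : ℕ, HR K p [p] s n := by
    rw [ENNReal.tsum_sigma (fun n (t : {t : Fin n → S // ∀ i, t i ≠ p}) =>
      chainProb K (s :: (List.ofFn t.1 ++ [p])))]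
    refine tsum_congr fun n => ?_
    rw [HR]
    refine (tsum_subtype {t : Fin n → S | ∀ i, t i ≠ p}
      (fun t => chainProb K (s :: (List.ofFn t ++ [p])))).trans ?_
    refine tsum_congr fun t => ?_
    by_cases ht : ∀ i, t i ≠ p <;> simp [Set.indicator, ht]
  rw [h]
  exact hit_le K hK p s

lemma WS_le (K : S → S → ℝ≥0∞) (hK : ∀ s, ∑' u, K s u = 1) (p q : S) (ρ : List S) (N : ℕ) :
    ∀ k, (∑' x : Idx S p ρ N k, wt K p q (wordOf p ρ N k x)) ≤ Fmass K p ρ ^ k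
  | 0 => by
      rw [pow_zero]
      have : (∑' t : Fin (N+1) → S, wt K p q (List.ofFn t)) = 1 := by
        rw [tsum_pi_succ (fun t => wt K p q (List.ofFn t))]
        have h1 : ∀ u : S, (∑' r : Fin N → S, wt K p q (List.ofFn (Fin.cons u r)))
            = if u = q then 1 else 0 := by
          intro u
          have h2 : ∀ r : Fin N → S, wt K p q (List.ofFn (Fin.cons u r))
              = (if u = q then 1 else 0) * chainProb K (u :: List.ofFn r) := by
            intro r
            rw [wt, ofFn_cons, List.getD_cons_zero]
          rw [tsum_congr h2, ENNReal.tsum_mul_left, sum_all K hK N u, mul_one]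
        rw [tsum_congr h1]
        exact tsum_ite_eq q 1
      exact le_of_eq this
  | k+1 => by
      rw [pow_succ]
      show (∑' x : Idx S p ρ N k × (Gap S p × FailT S p ρ),
        wt K p q (wordOf p ρ N (k+1) x)) ≤ Fmass K p ρ ^ k * Fmass K p ρ
      rw [ENNReal.tsum_prod']
      have key : ∀ a : Idx S p ρ N k,
          (∑' z : Gap S p × FailT S p ρ, wt K p q (wordOf p ρ N (k+1) (a, z)))
            ≤ wt K p q (wordOf p ρ N k a) * Fmass K p ρ := by
        intro a
        set w := wordOf p ρ N k a with hwdef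
        have hw : w ≠ [] := wordOf_ne_nil p ρ N k a
        have hwl : 0 < w.length := List.length_pos_iff.mpr hw
        set s := w.getLastD p with hsdef
        rw [ENNReal.tsum_prod']
        have hterm : ∀ (g : Gap S p) (b : FailT S p ρ),
            wt K p q (wordOf p ρ N (k+1) (a, g, b))
              = wt K p q w * (chainProb K (s :: (List.ofFn g.2.1 ++ [p]))
                  * chainProb K (p :: List.ofFn b.1)) := by
          intro g b
          rw [wordOf_succ]
          have e1 : wt K p q (w ++ (List.ofFn g.2.1 ++ p :: List.ofFn b.1))
              = wt K p q w * chainProb K (s :: (List.ofFn g.2.1 ++ p :: List.ofFn b.1)) := by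
            rw [wt, wt, List.getD_append _ _ _ _ hwl, chainProb_append K p w hw]
            ring
          rw [e1]
          have e2 : s :: (List.ofFn g.2.1 ++ p :: List.ofFn b.1)
              = (s :: List.ofFn g.2.1) ++ p :: List.ofFn b.1 := by simp
          rw [e2, chainProb_append_cons]
          have e3 : (s :: List.ofFn g.2.1) ++ [p] = s :: (List.ofFn g.2.1 ++ [p]) := by simp
          rw [e3]
        calc (∑' (g : Gap S p) (b : FailT S p ρ), wt K p q (wordOf p ρ N (k+1) (a, g, b)))
            = ∑' (g : Gap S p), wt K p q w * chainProb K (s :: (List.ofFn g.2.1 ++ [p]))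
                * Fmass K p ρ := by
              refine tsum_congr fun g => ?_
              rw [tsum_congr (hterm g), ENNReal.tsum_mul_left, ENNReal.tsum_mul_left, Fmass,
                mul_assoc]
          _ = wt K p q w * (∑' (g : Gap S p), chainProb K (s :: (List.ofFn g.2.1 ++ [p])))
                * Fmass K p ρ := by
              rw [ENNReal.tsum_mul_right, ENNReal.tsum_mul_left]
          _ ≤ wt K p q w * 1 * Fmass K p ρ := by
              gcongr
              exact gap_le K hK p s
          _ = wt K p q w * Fmass K p ρ := by rw [mul_one]
      calc (∑' (a : Idx S p ρ N k) (z : Gap S p × FailT S p ρ),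
            wt K p q (wordOf p ρ N (k+1) (a, z)))
          ≤ ∑' (a : Idx S p ρ N k), wt K p q (wordOf p ρ N k a) * Fmass K p ρ :=
            ENNReal.tsum_le_tsum key
        _ = (∑' (a : Idx S p ρ N k), wt K p q (wordOf p ρ N k a)) * Fmass K p ρ :=
            ENNReal.tsum_mul_right
        _ ≤ Fmass K p ρ ^ k * Fmass K p ρ := by
            gcongr
            exact WS_le K hK p q ρ N k


lemma cover {S : Type*} (p : S) (ρ : List S) (N : ℕ) (ω : ℕ → S)
    (hIO : {n | ω n = p}.Infinite)
    (hav : ∀ n, N+1 ≤ n → ∃ i < ρ.length + 1, ω (n+i) ≠ (p :: ρ).getD i p) :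
    ∀ k, ∃ x : Idx S p ρ N k,
      ∀ i < (wordOf p ρ N k x).length, ω i = (wordOf p ρ N k x).getD i p
  | 0 => by
      refine ⟨fun i => ω i, ?_⟩
      intro i hi
      change i < (List.ofFn (fun i : Fin (N+1) => ω i)).length at hi
      rw [List.length_ofFn] at hi
      change ω i = (List.ofFn (fun i : Fin (N+1) => ω i)).getD i p
      rw [getD_ofFn _ _ i hi]
  | k+1 => by
      classical
      obtain ⟨x, hx⟩ := cover p ρ N ω hIO hav k
      set w := wordOf p ρ N k x with hwdef
      have hlenN : N+1 ≤ w.length := wordOf_len p ρ N k x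
      obtain ⟨n1, hn1, hgt⟩ := hIO.exists_gt w.length
      have hE : ∃ m, ω (w.length + m) = p := ⟨n1 - w.length, by
        rw [Nat.add_sub_cancel' (le_of_lt hgt)]; exact hn1⟩
      have hm0 : ω (w.length + Nat.find hE) = p := Nat.find_spec hE
      set m0 := Nat.find hE with hm0def
      have hmin : ∀ i : Fin m0, (fun i : Fin m0 => ω (w.length + i)) i ≠ p :=
        fun i => Nat.find_min hE i.isLt
      have hn0N : N + 1 ≤ w.length + m0 := le_trans hlenN (Nat.le_add_right _ _)
      obtain ⟨j, hj, hne⟩ := hav (w.length + m0) hn0N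
      rcases j with _ | j'
      · exact absurd hm0 (by simpa using hne)
      · have hj' : j' < ρ.length := by omega
        have hb : (fun i : Fin ρ.length => ω (w.length + m0 + 1 + i)) ≠ fun i => ρ.get i := by
          intro hEq
          apply hne
          have h1 := congrFun hEq ⟨j', hj'⟩
          simp only at h1
          have h2 : (p :: ρ).getD (j'+1) p = ρ.get ⟨j', hj'⟩ := by
            rw [List.getD_cons_succ, List.getD_eq_getElem ρ p hj']
            simp [List.get_eq_getElem]
          rw [h2, ← h1]
          congr 1
          omega
        refine ⟨(x, ⟨m0, fun i => ω (w.length + i), hmin⟩,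
          ⟨fun i => ω (w.length + m0 + 1 + i), hb⟩), ?_⟩
        rw [wordOf_succ]
        intro i hi
        by_cases hiw : i < w.length
        · rw [List.getD_append _ _ _ _ hiw]
          exact hx i hiw
        · push_neg at hiw
          obtain ⟨j, rfl⟩ : ∃ j, i = w.length + j := ⟨i - w.length, by omega⟩
          rw [List.getD_append_right _ _ _ _ (Nat.le_add_right _ _)]
          simp only [List.length_append, List.length_ofFn, List.length_cons] at hi
          have hwleq : (wordOf p ρ N k x).length = w.length := by rw [hwdef]
          have hjlt : j < m0 + (ρ.length + 1) := by omega
          simp only [Nat.add_sub_cancel_left]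
          by_cases hjm : j < m0
          · rw [List.getD_append _ _ _ _ (by simpa using hjm), getD_ofFn _ _ j hjm]
          · push_neg at hjm
            obtain ⟨j2, rfl⟩ : ∃ j2, j = m0 + j2 := ⟨j - m0, by omega⟩
            rw [List.getD_append_right _ _ _ _ (by simpa using hjm)]
            simp only [List.length_ofFn, Nat.add_sub_cancel_left]
            rcases j2 with _ | j3
            · simp only [List.getD_cons_zero]
              simpa using hm0
            · have hj3 : j3 < ρ.length := by omega
              rw [List.getD_cons_succ, getD_ofFn _ _ j3 hj3]
              show ω (w.length + (m0 + (j3+1))) = ω (w.length + m0 + 1 + j3)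
              congr 1
              omega

end SF

/-- Strong fairness of probabilistic choices in countable Markov chains:
if `π` is a finite path starting in `p` with strictly positive probability,
then for every initial state `q`, the probability that `π` is traversed (as an
infix) infinitely often equals the probability that `p` is visited infinitely
often. -/
theorem stmt14 {S : Type*} [Countable S] [DecidableEq S] [MeasurableSpace S]
    (K : S → S → ℝ≥0∞) (hK : ∀ s, ∑' u, K s u = 1)
    (Pq : S → Measure (ℕ → S)) (hprob : ∀ q, IsProbabilityMeasure (Pq q))
    (hind : ∀ (q : S) (m : ℕ) (w : ℕ → S),
      Pq q {ω | ∀ i ≤ m, ω i = w i} =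
        (if w 0 = q then 1 else 0) * ∏ i ∈ Finset.range m, K (w i) (w (i + 1)))
    (p : S) (π : List S) (hhead : π.head? = some p)
    (hpos : 0 < chainProb K π)
    (q : S) :
    Pq q {ω | {n : ℕ | ∀ i < π.length, ω (n + i) = π.getD i p}.Infinite}
      = Pq q {ω | {n : ℕ | ω n = p}.Infinite} := by
  classical
  obtain ⟨ρ, rfl⟩ : ∃ ρ, π = p :: ρ := by
    rcases π with _ | ⟨a, ρ⟩
    · exact absurd hhead (by simp)
    · obtain rfl : a = p := by simpa using hhead
      exact ⟨ρ, rfl⟩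
  set μ := Pq q with hμ
  -- cylinder measures
  have cyl : ∀ l : List S, l ≠ [] →
      μ {ω | ∀ i < l.length, ω i = l.getD i p} = SF.wt K p q l := by
    intro l hl
    have hlen : 1 ≤ l.length := List.length_pos_iff.mpr hl
    have hset : {ω : ℕ → S | ∀ i < l.length, ω i = l.getD i p}
        = {ω : ℕ → S | ∀ i ≤ l.length - 1, ω i = l.getD i p} := by
      ext ω
      simp only [Set.mem_setOf_eq]
      constructor
      · intro h i hi; exact h i (by omega)
      · intro h i hi; exact h i (by omega)
    have h1 := hind q (l.length - 1) (fun i => l.getD i p)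
    rw [hset, h1]
    simp only [SF.wt]
    congr 1
    exact (SF.chainProb_eq_prod K p l hl).symm
  -- direction 1
  have hsub : {ω : ℕ → S | {n : ℕ | ∀ i < (p :: ρ).length, ω (n + i) = (p :: ρ).getD i p}.Infinite}
      ⊆ {ω : ℕ → S | {n : ℕ | ω n = p}.Infinite} := by
    intro ω h
    refine Set.Infinite.mono ?_ h
    intro n hn
    have := hn 0 (by simp)
    simpa using this
  have le1 : μ {ω : ℕ → S | {n : ℕ | ∀ i < (p :: ρ).length, ω (n + i) = (p :: ρ).getD i p}.Infinite}
      ≤ μ {ω : ℕ → S | {n : ℕ | ω n = p}.Infinite} := measure_mono hsub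
  -- Fmass < 1
  have hFadd := SF.Fmass_add K hK p ρ
  have hFle : SF.Fmass K p ρ ≤ 1 := by rw [← hFadd]; exact le_add_self
  have hFne : SF.Fmass K p ρ ≠ ⊤ := (lt_of_le_of_lt hFle ENNReal.one_lt_top).ne
  have hFlt : SF.Fmass K p ρ < 1 := by
    calc SF.Fmass K p ρ < SF.Fmass K p ρ + chainProb K (p :: ρ) :=
          ENNReal.lt_add_right hFne hpos.ne'
      _ = 1 := by rw [add_comm]; exact hFadd
  -- the bad sets have measure zero
  have hzero : ∀ N : ℕ, μ {ω : ℕ → S | {n : ℕ | ω n = p}.Infinite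
      ∧ ∀ n, N + 1 ≤ n → ¬∀ i < (p :: ρ).length, ω (n + i) = (p :: ρ).getD i p} = 0 := by
    intro N
    have key : ∀ k : ℕ, μ {ω : ℕ → S | {n : ℕ | ω n = p}.Infinite
        ∧ ∀ n, N + 1 ≤ n → ¬∀ i < (p :: ρ).length, ω (n + i) = (p :: ρ).getD i p}
          ≤ SF.Fmass K p ρ ^ k := by
      intro k
      have hcov : {ω : ℕ → S | {n : ℕ | ω n = p}.Infinite
          ∧ ∀ n, N + 1 ≤ n → ¬∀ i < (p :: ρ).length, ω (n + i) = (p :: ρ).getD i p}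
            ⊆ ⋃ x : SF.Idx S p ρ N k,
              {ω : ℕ → S | ∀ i < (SF.wordOf p ρ N k x).length,
                ω i = (SF.wordOf p ρ N k x).getD i p} := by
        rintro ω ⟨hIO, hav⟩
        have hav' : ∀ n, N + 1 ≤ n → ∃ i < ρ.length + 1, ω (n + i) ≠ (p :: ρ).getD i p := by
          intro n hn
          have h := hav n hn
          push_neg at h
          simpa using h
        obtain ⟨x, hx⟩ := SF.cover p ρ N ω hIO hav' k
        exact Set.mem_iUnion.mpr ⟨x, hx⟩
      calc μ _ ≤ μ (⋃ x : SF.Idx S p ρ N k,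
              {ω : ℕ → S | ∀ i < (SF.wordOf p ρ N k x).length,
                ω i = (SF.wordOf p ρ N k x).getD i p}) := measure_mono hcov
        _ ≤ ∑' x : SF.Idx S p ρ N k, μ {ω : ℕ → S | ∀ i < (SF.wordOf p ρ N k x).length,
                ω i = (SF.wordOf p ρ N k x).getD i p} := measure_iUnion_le _
        _ = ∑' x : SF.Idx S p ρ N k, SF.wt K p q (SF.wordOf p ρ N k x) :=
            tsum_congr fun x => cyl _ (SF.wordOf_ne_nil p ρ N k x)
        _ ≤ SF.Fmass K p ρ ^ k := SF.WS_le K hK p q ρ N k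
    have htend := ENNReal.tendsto_pow_atTop_nhds_zero_of_lt_one hFlt
    exact le_antisymm (ge_of_tendsto' htend key) zero_le
  -- direction 2
  have hzero2 : μ ({ω : ℕ → S | {n : ℕ | ω n = p}.Infinite}
      \ {ω : ℕ → S | {n : ℕ | ∀ i < (p :: ρ).length, ω (n + i) = (p :: ρ).getD i p}.Infinite})
        = 0 := by
    have hsub2 : {ω : ℕ → S | {n : ℕ | ω n = p}.Infinite}
        \ {ω : ℕ → S | {n : ℕ | ∀ i < (p :: ρ).length, ω (n + i) = (p :: ρ).getD i p}.Infinite}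
          ⊆ ⋃ N : ℕ, {ω : ℕ → S | {n : ℕ | ω n = p}.Infinite
            ∧ ∀ n, N + 1 ≤ n → ¬∀ i < (p :: ρ).length, ω (n + i) = (p :: ρ).getD i p} := by
      rintro ω ⟨h1, h2⟩
      simp only [Set.mem_iUnion, Set.mem_setOf_eq]
      have hfin : {n : ℕ | ∀ i < (p :: ρ).length, ω (n + i) = (p :: ρ).getD i p}.Finite :=
        Set.not_infinite.mp h2
      obtain ⟨N, hN⟩ := hfin.bddAbove
      refine ⟨N, h1, ?_⟩
      intro n hn hTn
      have := hN hTn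
      omega
    refine le_antisymm ?_ zero_le
    calc μ _ ≤ μ (⋃ N : ℕ, {ω : ℕ → S | {n : ℕ | ω n = p}.Infinite
            ∧ ∀ n, N + 1 ≤ n → ¬∀ i < (p :: ρ).length, ω (n + i) = (p :: ρ).getD i p}) :=
          measure_mono hsub2
      _ ≤ ∑' N : ℕ, μ {ω : ℕ → S | {n : ℕ | ω n = p}.Infinite
            ∧ ∀ n, N + 1 ≤ n → ¬∀ i < (p :: ρ).length, ω (n + i) = (p :: ρ).getD i p} :=
          measure_iUnion_le _
      _ = ∑' _ : ℕ, (0 : ℝ≥0∞) := tsum_congr fun N => hzero N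
      _ = 0 := tsum_zero
  have le2 : μ {ω : ℕ → S | {n : ℕ | ω n = p}.Infinite}
      ≤ μ {ω : ℕ → S | {n : ℕ | ∀ i < (p :: ρ).length, ω (n + i) = (p :: ρ).getD i p}.Infinite} := by
    calc μ {ω : ℕ → S | {n : ℕ | ω n = p}.Infinite}
        ≤ μ ({ω : ℕ → S | {n : ℕ | ∀ i < (p :: ρ).length, ω (n + i) = (p :: ρ).getD i p}.Infinite}
            ∪ ({ω : ℕ → S | {n : ℕ | ω n = p}.Infinite}
              \ {ω : ℕ → S | {n : ℕ | ∀ i < (p :: ρ).length,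
                  ω (n + i) = (p :: ρ).getD i p}.Infinite})) := by
          refine measure_mono ?_
          intro ω h
          by_cases hω : ω ∈ {ω : ℕ → S | {n : ℕ | ∀ i < (p :: ρ).length,
              ω (n + i) = (p :: ρ).getD i p}.Infinite}
          · exact Or.inl hω
          · exact Or.inr ⟨h, hω⟩
      _ ≤ μ {ω : ℕ → S | {n : ℕ | ∀ i < (p :: ρ).length, ω (n + i) = (p :: ρ).getD i p}.Infinite}
            + μ ({ω : ℕ → S | {n : ℕ | ω n = p}.Infinite}
              \ {ω : ℕ → S | {n : ℕ | ∀ i < (p :: ρ).length,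
                  ω (n + i) = (p :: ρ).getD i p}.Infinite}) := measure_union_le _ _
      _ = μ {ω : ℕ → S | {n : ℕ | ∀ i < (p :: ρ).length, ω (n + i) = (p :: ρ).getD i p}.Infinite} := by
          rw [hzero2, add_zero]
  exact le_antisymm le1 le2
end

section
/- Let M be a countable MDP, T ⊆ S a sink (all successors of states in T remain in T), and φ = Safety(T) the set of plays that never visit T. Let val(s) = sup_σ P_{M,s,σ}(φ). If σ is a memoryless strategy such that from every controller state s ∉ T it moves to a successor s' with val(s') = val(s), and at every random state s the value is the P(s)-weighted average of successor values, then P_{M,s_0,σ}(φ) = val(s_0) for every state s_0, i.e., σ is optimal for safety. -/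
open MeasureTheory
open scoped ENNReal

open Classical in
/-- The strategy induced by a memoryless deterministic choice function. -/
noncomputable def liftMD {S : Type*} (σMD : S → S) : List S → S → ℝ≥0∞ := fun h u =>
  match h.getLast? with
  | none => 0
  | some s => if u = σMD s then 1 else 0

lemma last_hist {S : Type*} (v : ℕ → S) (n : ℕ) :
    ((List.range (n+1)).map v).getLast? = some (v n) := by
  rw [List.range_succ, List.map_append]
  simp

lemma pathProb_congr {S : Type*} (step : List S → S → ℝ≥0∞) {v v' : ℕ → S} (n : ℕ)
    (h : ∀ i ≤ n, v i = v' i) : pathProb step v n = pathProb step v' n := by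
  induction n with
  | zero => rfl
  | succ k ih =>
    simp only [pathProb]
    rw [ih (fun i hi => h i (by omega)),
      List.map_congr_left (fun i hi => h i (le_of_lt (List.mem_range.mp hi))),
      h (k+1) le_rfl]

open Classical in
lemma liftMD_concat {S : Type*} (σMD : S → S) (h : List S) (s u : S) :
    liftMD σMD (h ++ [s]) u = if u = σMD s then 1 else 0 := by
  simp [liftMD, List.getLast?_concat]

lemma liftMD_isStrategy {S : Type*} (isCtrl : S → Prop) (succ : S → S → Prop)
    (σMD : S → S) (hsuccMD : ∀ s, isCtrl s → succ s (σMD s)) :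
    IsStrategy isCtrl succ (liftMD σMD) := by
  intro h s hs
  constructor
  · classical
    rw [tsum_congr (fun u => liftMD_concat σMD h s u)]
    simp
  · intro u hu
    rw [liftMD_concat] at hu
    by_cases he : u = σMD s
    · subst he; exact hsuccMD s hs
    · simp [he] at hu

/-- If every measurable subset of `S` is invariant under `g`, then every
measurable set of plays is invariant under the coordinatewise action of `g`. -/
lemma pi_invariant {S : Type*} [MeasurableSpace S] (g : S → S)
    (hg : ∀ A : Set S, MeasurableSet A → g ⁻¹' A = A) :
    ∀ B : Set (ℕ → S), MeasurableSet B → (fun ω (n : ℕ) => g (ω n)) ⁻¹' B = B := by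
  let m' : MeasurableSpace (ℕ → S) :=
    { MeasurableSet' := fun B => (fun ω (n : ℕ) => g (ω n)) ⁻¹' B = B
      measurableSet_empty := by simp
      measurableSet_compl := fun B hB => by
        show _ ⁻¹' Bᶜ = Bᶜ
        rw [Set.preimage_compl]
        exact congrArg compl hB
      measurableSet_iUnion := fun f hf => by
        show _ ⁻¹' (⋃ i, f i) = ⋃ i, f i
        rw [Set.preimage_iUnion]
        exact Set.iUnion_congr hf }
  have hle : (MeasurableSpace.pi : MeasurableSpace (ℕ → S)) ≤ m' := by
    refine iSup_le fun n => ?_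
    intro B hB
    obtain ⟨A, hA, rfl⟩ := hB
    show (fun ω (k : ℕ) => g (ω k)) ⁻¹' ((fun b : ℕ → S => b n) ⁻¹' A)
        = (fun b : ℕ → S => b n) ⁻¹' A
    have h2 : (fun ω (k : ℕ) => g (ω k)) ⁻¹' ((fun b : ℕ → S => b n) ⁻¹' A)
        = (fun b : ℕ → S => b n) ⁻¹' (g ⁻¹' A) := rfl
    rw [h2, hg A hA]
  exact fun B hB => hle B hB

def extn {S : Type*} (n : ℕ) (w : Fin (n+1) → S) : ℕ → S :=
  fun i => w ⟨min i n, by omega⟩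

lemma extn_le {S : Type*} {n : ℕ} (w : Fin (n+1) → S) {i : ℕ} (hi : i ≤ n) :
    extn n w i = w ⟨i, by omega⟩ := by
  simp [extn, Nat.min_eq_left hi]

lemma mem_cyl_extn {S : Type*} {n : ℕ} {w : Fin (n+1) → S} {ω : ℕ → S} :
    ω ∈ cyl (extn n w) n ↔ ∀ i : Fin (n+1), ω i = w i := by
  constructor
  · intro h i
    have := h i.1 (by omega)
    rwa [extn_le w (by omega : (i : ℕ) ≤ n), Fin.eta] at this
  · intro h i hi
    rw [extn_le w hi]
    exact h ⟨i, by omega⟩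

/-- Append an element at the end of a finite path. -/
def snoc' {S : Type*} (n : ℕ) (w : Fin (n+1) → S) (u : S) : Fin (n+2) → S :=
  fun i => if h : (i : ℕ) ≤ n then w ⟨i, by omega⟩ else u

def snocEquiv' (S : Type*) (n : ℕ) : ((Fin (n+1) → S) × S) ≃ (Fin (n+2) → S) where
  toFun p := snoc' n p.1 p.2
  invFun w := (fun i => w ⟨i, by omega⟩, w ⟨n+1, by omega⟩)
  left_inv p := by
    refine Prod.ext (funext fun i => ?_) ?_
    · simp [snoc', (by omega : (i : ℕ) ≤ n)]
    · simp [snoc']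
  right_inv w := by
    funext i
    by_cases h : (i : ℕ) ≤ n
    · simp [snoc', h]
    · have : (i : ℕ) = n + 1 := by omega
      simp only [snoc', dif_neg h]
      congr 1
      exact (Fin.ext this.symm)

lemma snoc'_zero {S : Type*} {n : ℕ} (w : Fin (n+1) → S) (u : S) :
    snoc' n w u 0 = w 0 := by
  simp [snoc']

lemma extn_snoc'_le {S : Type*} {n : ℕ} (w : Fin (n+1) → S) (u : S) {i : ℕ} (hi : i ≤ n) :
    extn (n+1) (snoc' n w u) i = extn n w i := by
  rw [extn_le _ (by omega : i ≤ n+1), extn_le _ hi]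
  simp [snoc', hi]

lemma extn_snoc'_last {S : Type*} {n : ℕ} (w : Fin (n+1) → S) (u : S) :
    extn (n+1) (snoc' n w u) (n+1) = u := by
  rw [extn_le _ le_rfl]
  simp [snoc']

lemma snoc'_avoid {S : Type*} {n : ℕ} (w : Fin (n+1) → S) (u : S) (T : Set S) :
    (∀ i : Fin (n+2), snoc' n w u i ∉ T) ↔ ((∀ i : Fin (n+1), w i ∉ T) ∧ u ∉ T) := by
  constructor
  · intro h
    constructor
    · intro i
      have := h ⟨i, by omega⟩
      rwa [show snoc' n w u ⟨(i:ℕ), by omega⟩ = w i by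
        simp [snoc', (by omega : ((i:ℕ) : ℕ) ≤ n)]] at this
    · have := h ⟨n+1, by omega⟩
      rwa [show snoc' n w u ⟨n+1, by omega⟩ = u by simp [snoc']] at this
  · rintro ⟨h1, h2⟩ i
    by_cases h : (i : ℕ) ≤ n
    · rw [show snoc' n w u i = w ⟨i, by omega⟩ by simp [snoc', h]]
      exact h1 _
    · rw [show snoc' n w u i = u by simp [snoc', h]]
      exact h2

lemma snoc'_last {S : Type*} {n : ℕ} (w : Fin (n+1) → S) (u : S) :
    snoc' n w u (Fin.last (n+1)) = u := by
  simp [snoc', Fin.last]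

lemma cyl_zero {S : Type*} (s : S) : cyl (fun _ => s) 0 = {ω : ℕ → S | ω 0 = s} := by
  ext ω
  constructor
  · intro h; exact h 0 le_rfl
  · intro h i hi
    have : i = 0 := Nat.le_zero.mp hi
    rw [this]; exact h

/-- Optimality of value-preserving MD strategies for safety: let `T` be a
sink and `φ = Safety T` the plays never visiting `T`. If the memoryless
strategy `σMD` moves from every controller state `s ∉ T` to a successor of
equal value, and at every random state the value is the `tr`-weighted average
of the successor values, then `σMD` attains the value from every state. -/
theorem stmt15 {S : Type*} [Countable S] [MeasurableSpace S]
    (isCtrl : S → Prop) (succ : S → S → Prop) (tr : S → S → ℝ≥0∞)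
    (htr : ∀ s u, ¬ isCtrl s → tr s u ≠ 0 → succ s u)
    (Pm : S → (List S → S → ℝ≥0∞) → Measure (ℕ → S))
    (hprob : ∀ s σ', IsProbabilityMeasure (Pm s σ'))
    (hind : ∀ (s : S) (σ' : List S → S → ℝ≥0∞), IsStrategy isCtrl succ σ' →
      IsInduced (Pm s σ') s (extStep isCtrl tr σ'))
    (T : Set S) (hsink : ∀ s ∈ T, ∀ u, succ s u → u ∈ T)
    (val : S → ℝ≥0∞)
    (hval : ∀ s, val s =
      ⨆ (σ' : List S → S → ℝ≥0∞) (_ : IsStrategy isCtrl succ σ'),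
        Pm s σ' {ω | ∀ n, ω n ∉ T})
    (σMD : S → S)
    (hsuccMD : ∀ s, isCtrl s → succ s (σMD s))
    (hpres : ∀ s, isCtrl s → s ∉ T → val (σMD s) = val s)
    (hmart : ∀ s, ¬ isCtrl s → val s = ∑' u, tr s u * val u) :
    ∀ s₀ : S, Pm s₀ (liftMD σMD) {ω | ∀ n, ω n ∉ T} = val s₀ := by
  classical
  have hstrat : IsStrategy isCtrl succ (liftMD σMD) :=
    liftMD_isStrategy isCtrl succ σMD hsuccMD
  -- singletons of S are measurable
  have hsep : ∀ s s' : S, s ≠ s' → ∃ A : Set S, MeasurableSet A ∧ s ∈ A ∧ s' ∉ A := by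
    intro s s' hne
    by_contra hcon
    push_neg at hcon
    have hiff : ∀ A : Set S, MeasurableSet A → (s ∈ A ↔ s' ∈ A) := by
      intro A hA
      refine ⟨hcon A hA, fun h' => ?_⟩
      by_contra hs
      exact (hcon Aᶜ hA.compl hs) h'
    set g : S → S := fun x => if x = s then s' else if x = s' then s else x with hg
    have hginv : ∀ A : Set S, MeasurableSet A → g ⁻¹' A = A := by
      intro A hA
      ext x
      simp only [Set.mem_preimage, hg]
      split_ifs with h1 h2
      · subst h1; exact (hiff A hA).symm
      · subst h2; exact (hiff A hA)
      · exact Iff.rfl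
    have hpiinv := pi_invariant g hginv
    have hIs := hind s _ hstrat
    have h1 : Pm s (liftMD σMD) {ω : ℕ → S | ω 0 = s} = 1 := by
      have h := hIs 0 (fun _ => s)
      rw [cyl_zero] at h
      simpa [pathProb] using h
    have h0 : Pm s (liftMD σMD) {ω : ℕ → S | ω 0 = s'} = 0 := by
      have h := hIs 0 (fun _ => s')
      rw [cyl_zero] at h
      simpa [pathProb, Ne.symm hne] using h
    set ν := Pm s (liftMD σMD)
    set B := toMeasurable ν {ω : ℕ → S | ω 0 = s'} with hB
    have hBm : MeasurableSet B := measurableSet_toMeasurable _ _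
    have hBsub : {ω : ℕ → S | ω 0 = s'} ⊆ B := subset_toMeasurable _ _
    have hsub : {ω : ℕ → S | ω 0 = s} ⊆ B := by
      intro ω hω
      have hmem : (fun n : ℕ => g (ω n)) ∈ {ω : ℕ → S | ω 0 = s'} := by
        show g (ω 0) = s'
        have hω0 : ω 0 = s := hω
        rw [hω0]
        simp [hg]
      have hBmem := hBsub hmem
      have hinvB := hpiinv B hBm
      rw [← hinvB]
      exact hBmem
    have hcontra : (1:ℝ≥0∞) ≤ 0 := by
      calc (1:ℝ≥0∞) = ν {ω : ℕ → S | ω 0 = s} := h1.symm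
      _ ≤ ν B := measure_mono hsub
      _ = 0 := by rw [hB, measure_toMeasurable]; exact h0
    simp at hcontra
  have hsing : ∀ s : S, MeasurableSet ({s} : Set S) := by
    intro s
    have hAll : ∀ s' : {x : S // x ≠ s}, ∃ A : Set S, MeasurableSet A ∧ s ∈ A ∧ (s':S) ∉ A :=
      fun s' => hsep s s' (Ne.symm s'.2)
    choose A hAm hAs hAs' using hAll
    have hseq : ({s} : Set S) = ⋂ s' : {x : S // x ≠ s}, A s' := by
      ext x
      simp only [Set.mem_singleton_iff, Set.mem_iInter]
      constructor
      · rintro rfl s'; exact hAs s'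
      · intro hx
        by_contra hxs
        exact hAs' ⟨x, hxs⟩ (hx ⟨x, hxs⟩)
    rw [hseq]
    exact MeasurableSet.iInter fun s' => hAm s'
  have hmeasS : ∀ A : Set S, MeasurableSet A := by
    intro A
    have : A = ⋃ a : A, ({(a : S)} : Set S) := by ext x; simp
    rw [this]
    exact MeasurableSet.iUnion fun a => hsing a
  have hcoord : ∀ (n : ℕ) (A : Set S), MeasurableSet {ω : ℕ → S | ω n ∈ A} :=
    fun n A => (measurable_pi_apply n) (hmeasS A)
  have hmeasCyl : ∀ (w : ℕ → S) (n : ℕ), MeasurableSet (cyl w n) := by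
    intro w n
    have : cyl w n = ⋂ (i : ℕ) (_ : i ≤ n), {ω : ℕ → S | ω i ∈ ({w i} : Set S)} := by
      ext ω; simp [cyl]
    rw [this]
    exact MeasurableSet.iInter fun i => MeasurableSet.iInter fun _ => hcoord i _
  -- value facts
  have hval1 : ∀ s, val s ≤ 1 := by
    intro s
    rw [hval s]
    refine iSup₂_le fun σ' hσ' => ?_
    haveI := hprob s σ'
    exact prob_le_one
  have hstart1 : ∀ (s : S) (σ' : List S → S → ℝ≥0∞), IsStrategy isCtrl succ σ' →
      Pm s σ' {ω : ℕ → S | ω 0 = s} = 1 := by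
    intro s σ' hσ'
    have h := hind s σ' hσ' 0 (fun _ => s)
    rw [cyl_zero] at h
    simpa [pathProb] using h
  have hvalT : ∀ u ∈ T, val u = 0 := by
    intro u hu
    rw [hval u]
    refine le_antisymm (iSup₂_le fun σ' hσ' => ?_) zero_le
    haveI := hprob u σ'
    have h1 := hstart1 u σ' hσ'
    have hms : MeasurableSet {ω : ℕ → S | ω 0 = u} := hcoord 0 {u}
    have hc : Pm u σ' ({ω : ℕ → S | ω 0 = u}ᶜ) = 0 := by
      rw [measure_compl hms (measure_ne_top _ _), h1, measure_univ, tsub_self]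
    calc Pm u σ' {ω | ∀ n, ω n ∉ T} ≤ Pm u σ' ({ω : ℕ → S | ω 0 = u}ᶜ) := by
          refine measure_mono fun ω hω => ?_
          intro h0
          exact hω 0 (by rw [Set.mem_setOf_eq] at h0; rw [h0]; exact hu)
    _ = 0 := hc
  intro s₀
  haveI := hprob s₀ (liftMD σMD)
  have hI : IsInduced (Pm s₀ (liftMD σMD)) s₀ (extStep isCtrl tr (liftMD σMD)) :=
    hind s₀ _ hstrat
  set μ := Pm s₀ (liftMD σMD) with hμdef
  set st := extStep isCtrl tr (liftMD σMD) with hstdef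
  by_cases hsT : s₀ ∈ T
  · -- start in T: both sides are 0
    have h1 : μ {ω : ℕ → S | ω 0 = s₀} = 1 := hstart1 s₀ _ hstrat
    have hms : MeasurableSet {ω : ℕ → S | ω 0 = s₀} := hcoord 0 {s₀}
    have hc : μ ({ω : ℕ → S | ω 0 = s₀}ᶜ) = 0 := by
      rw [measure_compl hms (measure_ne_top _ _), h1, measure_univ, tsub_self]
    have hle : μ {ω | ∀ n, ω n ∉ T} ≤ 0 := by
      rw [← hc]
      refine measure_mono fun ω hω => ?_
      intro h0
      exact hω 0 (by rw [Set.mem_setOf_eq] at h0; rw [h0]; exact hsT)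
    rw [hvalT s₀ hsT]
    exact le_antisymm hle zero_le
  -- main case : s₀ ∉ T
  have hcylval : ∀ (n : ℕ) (w : Fin (n+1) → S),
      μ (cyl (extn n w) n) = (if w 0 = s₀ then 1 else 0) * pathProb st (extn n w) n := by
    intro n w
    have h := hI n (extn n w)
    have h0 : extn n w 0 = w 0 := by
      rw [extn_le w (Nat.zero_le n)]
      congr 1
    rw [h0] at h
    exact h
  have hdisj : ∀ n : ℕ, Pairwise (Function.onFun Disjoint
      (fun w : Fin (n+1) → S => cyl (extn n w) n)) := by
    intro n w w' hne
    refine Set.disjoint_left.mpr fun ω hω hω' => hne (funext fun i => ?_)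
    exact (mem_cyl_extn.mp hω i).symm.trans (mem_cyl_extn.mp hω' i)
  have hcover : ∀ n : ℕ, (⋃ w : Fin (n+1) → S, cyl (extn n w) n) = Set.univ := by
    intro n
    ext ω
    simp only [Set.mem_iUnion, Set.mem_univ, iff_true]
    exact ⟨fun i => ω i, mem_cyl_extn.mpr fun i => rfl⟩
  have htot : ∀ n : ℕ, (∑' w : Fin (n+1) → S, μ (cyl (extn n w) n)) = 1 := by
    intro n
    rw [← measure_iUnion (hdisj n) (fun w => hmeasCyl _ n), hcover n, measure_univ]
  -- the step factor
  have hstepval : ∀ (n : ℕ) (w : Fin (n+1) → S) (u : S),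
      st ((List.range (n+1)).map (extn n w)) u =
        if isCtrl (w (Fin.last n)) then (if u = σMD (w (Fin.last n)) then 1 else 0)
        else tr (w (Fin.last n)) u := by
    intro n w u
    have hlast : extn n w n = w (Fin.last n) := extn_le w le_rfl
    rw [hstdef]
    simp only [extStep, last_hist (extn n w) n, liftMD, hlast]
  -- factorization of cylinder measures
  have hfac : ∀ (n : ℕ) (w : Fin (n+1) → S) (u : S),
      μ (cyl (extn (n+1) (snoc' n w u)) (n+1)) =
        μ (cyl (extn n w) n) * st ((List.range (n+1)).map (extn n w)) u := by
    intro n w u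
    rw [hcylval (n+1) _, hcylval n w, snoc'_zero]
    have hp : pathProb st (extn (n+1) (snoc' n w u)) (n+1)
        = pathProb st (extn n w) n * st ((List.range (n+1)).map (extn n w)) u := by
      simp only [pathProb]
      rw [pathProb_congr st n (fun i hi => extn_snoc'_le w u hi),
        List.map_congr_left (fun i hi =>
          extn_snoc'_le w u (Nat.lt_succ_iff.mp (List.mem_range.mp hi))),
        extn_snoc'_last]
    rw [hp]
    ring
  -- the martingale identity
  have hA : ∀ n : ℕ, (∑' w : Fin (n+1) → S,
      μ (cyl (extn n w) n) * (if ∀ i, w i ∉ T then val (w (Fin.last n)) else 0)) = val s₀ := by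
    intro n
    induction n with
    | zero =>
      rw [tsum_eq_single (fun _ : Fin 1 => s₀) ?_]
      · rw [hcylval 0 _]
        simp [pathProb, hsT]
      · intro w hw
        rw [hcylval 0 w]
        have hne : w 0 ≠ s₀ := fun h => hw (funext fun i => by
          have hi : i = 0 := Subsingleton.elim i 0
          rw [hi, h])
        simp [hne]
    | succ n ih =>
      rw [← Equiv.tsum_eq (snocEquiv' S n)]
      have hre : ∀ c : (Fin (n+1) → S) × S, (snocEquiv' S n) c = snoc' n c.1 c.2 :=
        fun _ => rfl
      simp only [hre]
      rw [ENNReal.tsum_prod']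
      rw [← ih]
      refine tsum_congr fun w => ?_
      show (∑' u : S, μ (cyl (extn (n+1) (snoc' n w u)) (n+1)) *
          (if ∀ i, snoc' n w u i ∉ T then val (snoc' n w u (Fin.last (n+1))) else 0)) = _
      by_cases hav : ∀ i : Fin (n+1), w i ∉ T
      · have hsl : w (Fin.last n) ∉ T := hav _
        have hterm : ∀ u : S, μ (cyl (extn (n+1) (snoc' n w u)) (n+1)) *
            (if ∀ i, snoc' n w u i ∉ T then val (snoc' n w u (Fin.last (n+1))) else 0)
            = μ (cyl (extn n w) n) * (st ((List.range (n+1)).map (extn n w)) u * val u) := by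
          intro u
          rw [hfac n w u, snoc'_last, mul_assoc]
          congr 1
          congr 1
          by_cases hu : u ∈ T
          · rw [if_neg, hvalT u hu]
            rw [snoc'_avoid]
            simp [hu]
          · rw [if_pos]
            rw [snoc'_avoid]
            exact ⟨hav, hu⟩
        rw [tsum_congr hterm, ENNReal.tsum_mul_left]
        congr 1
        rw [if_pos hav]
        by_cases hc : isCtrl (w (Fin.last n))
        · rw [tsum_congr (fun u => by rw [hstepval n w u, if_pos hc])]
          rw [tsum_eq_single (σMD (w (Fin.last n)))]
          · rw [if_pos rfl, one_mul]
            exact hpres _ hc hsl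
          · intro u hu
            rw [if_neg hu, zero_mul]
        · rw [tsum_congr (fun u => by rw [hstepval n w u, if_neg hc])]
          exact (hmart _ hc).symm
      · have hterm : ∀ u : S, μ (cyl (extn (n+1) (snoc' n w u)) (n+1)) *
            (if ∀ i, snoc' n w u i ∉ T then val (snoc' n w u (Fin.last (n+1))) else 0) = 0 := by
          intro u
          rw [if_neg, mul_zero]
          rw [snoc'_avoid]
          exact fun h => hav h.1
        rw [tsum_congr hterm]
        simp [hav]
  -- hitting sets
  set Hn : ℕ → Set (ℕ → S) := fun n => {ω | ∃ i ≤ n, ω i ∈ T} with hHndef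
  have hHn_meas : ∀ n, MeasurableSet (Hn n) := by
    intro n
    have : Hn n = ⋃ (i : ℕ) (_ : i ≤ n), {ω : ℕ → S | ω i ∈ T} := by
      ext ω; simp [hHndef]
    rw [this]
    exact MeasurableSet.iUnion fun i => MeasurableSet.iUnion fun _ => hcoord i T
  have hHn_eq : ∀ n, Hn n = ⋃ w : Fin (n+1) → S,
      (if ∀ i, w i ∉ T then (∅ : Set (ℕ → S)) else cyl (extn n w) n) := by
    intro n
    ext ω
    simp only [hHndef, Set.mem_setOf_eq, Set.mem_iUnion]
    constructor
    · rintro ⟨i, hi, hiT⟩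
      refine ⟨fun j => ω j, ?_⟩
      rw [if_neg]
      · exact mem_cyl_extn.mpr fun _ => rfl
      · push_neg
        exact ⟨⟨i, by omega⟩, hiT⟩
    · rintro ⟨w, hw⟩
      by_cases hav : ∀ i : Fin (n+1), w i ∉ T
      · rw [if_pos hav] at hw
        exact absurd hw (Set.notMem_empty ω)
      · rw [if_neg hav] at hw
        push_neg at hav
        obtain ⟨i, hiT⟩ := hav
        exact ⟨i, by omega, by rw [mem_cyl_extn.mp hw i]; exact hiT⟩
  have hHn_val : ∀ n, μ (Hn n) = ∑' w : Fin (n+1) → S,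
      (if ∀ i, w i ∉ T then 0 else μ (cyl (extn n w) n)) := by
    intro n
    rw [hHn_eq n, measure_iUnion]
    · refine tsum_congr fun w => ?_
      split_ifs
      · simp
      · rfl
    · intro w w' hne
      have hmono' : ∀ w'' : Fin (n+1) → S,
          (if ∀ i, w'' i ∉ T then (∅ : Set (ℕ → S)) else cyl (extn n w'') n)
            ≤ cyl (extn n w'') n := by
        intro w''
        split_ifs
        · exact Set.empty_subset _
        · exact le_rfl
      exact Disjoint.mono (hmono' w) (hmono' w') (hdisj n hne)
    · intro w
      split_ifs
      · exact MeasurableSet.empty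
      · exact hmeasCyl _ n
  have hsum : ∀ n, val s₀ + μ (Hn n) ≤ 1 := by
    intro n
    rw [← hA n, hHn_val n, ← ENNReal.tsum_add, ← htot n]
    refine ENNReal.tsum_le_tsum fun w => ?_
    by_cases hav : ∀ i : Fin (n+1), w i ∉ T
    · rw [if_pos hav, if_pos hav, add_zero]
      calc μ (cyl (extn n w) n) * val (w (Fin.last n)) ≤ μ (cyl (extn n w) n) * 1 :=
            mul_le_mul_right (hval1 _) _
      _ = μ (cyl (extn n w) n) := mul_one _
    · rw [if_neg hav, if_neg hav, mul_zero, zero_add]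
  -- the bad set
  set Bad : Set (ℕ → S) := {ω | ∃ i, ω i ∈ T} with hBaddef
  have hBadU : Bad = ⋃ n, Hn n := by
    ext ω
    simp only [hBaddef, Set.mem_setOf_eq, Set.mem_iUnion, hHndef]
    exact ⟨fun ⟨i, hi⟩ => ⟨i, i, le_rfl, hi⟩, fun ⟨n, i, _, hi⟩ => ⟨i, hi⟩⟩
  have hmono : Monotone Hn := by
    intro a b hab ω hω
    obtain ⟨i, hi, hiT⟩ := hω
    exact ⟨i, hi.trans hab, hiT⟩
  have hBadVal : μ Bad = ⨆ n, μ (Hn n) := by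
    rw [hBadU]
    exact hmono.measure_iUnion
  have hBadLe : μ Bad ≤ 1 - val s₀ := by
    rw [hBadVal]
    refine iSup_le fun n => ENNReal.le_sub_of_add_le_left ?_ (hsum n)
    exact ne_top_of_le_ne_top ENNReal.one_ne_top (hval1 s₀)
  have hBadMeas : MeasurableSet Bad := by
    rw [hBadU]
    exact MeasurableSet.iUnion hHn_meas
  have hsafecompl : {ω : ℕ → S | ∀ n, ω n ∉ T} = Badᶜ := by
    ext ω
    simp [hBaddef]
  have hup : μ {ω | ∀ n, ω n ∉ T} ≤ val s₀ := by
    rw [hval s₀]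
    exact le_iSup₂ (f := fun (σ' : List S → S → ℝ≥0∞) (_ : IsStrategy isCtrl succ σ') =>
      Pm s₀ σ' {ω | ∀ n, ω n ∉ T}) (liftMD σMD) hstrat
  have hlow : val s₀ ≤ μ {ω | ∀ n, ω n ∉ T} := by
    rw [show ({ω | ∀ n, ω n ∉ T} : Set (ℕ → S)) = Badᶜ from hsafecompl,
      measure_compl hBadMeas (measure_ne_top _ _), measure_univ]
    calc val s₀ = 1 - (1 - val s₀) := (ENNReal.sub_sub_cancel ENNReal.one_ne_top (hval1 s₀)).symm
    _ ≤ 1 - μ Bad := tsub_le_tsub_left hBadLe 1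
  exact le_antisymm hup hlow
end
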